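/- arXiv:2206.14201 — 12 statements merged into one kernel-verified Lean document; each statement's English description precedes it below -/
import Mathlib

section
/- Let p be a prime and define P: ℤ_{p²} × ℤ_{p²} → ℤ_p by P(a + pc, b + pd) = 1 if a + b ≥ p and 0 otherwise, where a, b, c, d ∈ {0,...,p-1}. Then the Gray map φ: ℤ_{p²} → ℤ_p^p satisfies φ(u + v) = φ(u) + φ(v) + φ(p·P(u,v)) for all u, v ∈ ℤ_{p²}, where P(u,v) is lifted to ℤ_{p²} via the natural inclusion {0,...,p-1} ⊂ ℤ_{p²}. -/
/-- The Gray map `φ : ℤ_{p²} → ℤ_p^p`, sending `θ = θ₀·p + θ₁` (with digits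
`0 ≤ θ₀, θ₁ < p`) to the vector whose `i`-th coordinate is `θ₀ + θ₁·i`. -/
def gray (p : ℕ) (θ : ZMod (p ^ 2)) : Fin p → ZMod p :=
  fun i => ((θ.val / p : ℕ) : ZMod p) + ((θ.val % p : ℕ) : ZMod p) * (i.val : ZMod p)

/-- The carry function `P : ℤ_{p²} × ℤ_{p²} → {0,1}`: writing `u = a + p·c`,
`v = b + p·d` with digits in `{0,…,p-1}`, `P(u,v) = 1` iff `a + b ≥ p`. -/
def carry (p : ℕ) (u v : ZMod (p ^ 2)) : ℕ :=
  if p ≤ u.val % p + v.val % p then 1 else 0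

/-! Every coordinate of `φ(θ)` is affine in the two base-`p` digits of `θ`. Under addition the
low digits add modulo `p` and the high digits add up to the carry `P(u,v)` out of the low
digits (`Nat.add_div`), and that carry is recovered as `φ(p·P(u,v))`, the constant vector
`P(u,v)`. -/

theorem gray_natCast (p n : ℕ) :
    gray p (n : ZMod (p ^ 2)) = fun i => ((n / p : ℕ) : ZMod p) + (n : ZMod p) * (i.val : ZMod p) := by
  funext i
  simp only [gray, ZMod.val_natCast]
  rw [Nat.mod_mod_of_dvd n (dvd_pow_self p two_ne_zero), sq, Nat.mod_mul_right_div_self,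
    ZMod.natCast_mod, ZMod.natCast_mod]

theorem gray_natCast_mul_self {p : ℕ} (hp : 0 < p) (c : ℕ) :
    gray p ((p * c : ℕ) : ZMod (p ^ 2)) = fun _ => (c : ZMod p) := by
  rw [gray_natCast, Nat.mul_div_cancel_left c hp]
  simp

theorem gray_natCast_add {p : ℕ} (hp : 0 < p) (m n : ℕ) :
    gray p ((m + n : ℕ) : ZMod (p ^ 2)) = gray p m + gray p n +
      gray p ((p * if p ≤ m % p + n % p then 1 else 0 : ℕ) : ZMod (p ^ 2)) := by
  funext i
  simp only [gray_natCast_mul_self hp, gray_natCast, Pi.add_apply, Nat.add_div hp]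
  push_cast
  ring

theorem gray_add_carry_general (p : ℕ) (u v : ZMod (p ^ 2)) :
    gray p (u + v) = gray p u + gray p v + gray p ((p * carry p u v : ℕ) : ZMod (p ^ 2)) := by
  rcases p.eq_zero_or_pos with rfl | hp
  · exact funext fun i => i.elim0
  have : NeZero (p ^ 2) := ⟨by positivity⟩
  have h := gray_natCast_add hp u.val v.val
  rwa [Nat.cast_add, ZMod.natCast_zmod_val, ZMod.natCast_zmod_val] at h

/-- `φ(u + v) = φ(u) + φ(v) + φ(p·P(u,v))` for all `u, v ∈ ℤ_{p²}`. -/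
theorem gray_add_carry (p : ℕ) (hp : p.Prime) (u v : ZMod (p ^ 2)) :
    gray p (u + v) = gray p u + gray p v + gray p ((p * carry p u v : ℕ) : ZMod (p ^ 2)) :=
  gray_add_carry_general p u v
end

section
/- Let p be prime, n a positive integer with gcd(n,p) = 1, and let f, h, g be monic polynomials over ℤ_{p²} with f·h·g = xⁿ - 1. Then in the quotient ring ℤ_{p²}[x]/(xⁿ-1), the ideal generated by fh + pf equals the ideal generated by fh and pfg, i.e., ⟨fh + pf⟩ = ⟨fh, pfg⟩. -/
open Polynomial

/-- The quotient map `ℤ_{p²}[x] → ℤ_{p²}[x]/(xⁿ - 1)`. -/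
noncomputable def Qmk (p n : ℕ) :
    Polynomial (ZMod (p ^ 2)) →+*
      Polynomial (ZMod (p ^ 2)) ⧸ Ideal.span {(X : Polynomial (ZMod (p ^ 2))) ^ n - 1} :=
  Ideal.Quotient.mk _

/-!
Modulo `p`, the factors `h` and `g` of the separable polynomial `xⁿ - 1` are coprime, and a
Bézout relation `a h + b g = 1` lifts from `𝔽_p[x]` to `ℤ_{p²}[x]` because the kernel of the
reduction consists of nilpotents. In the quotient ring we then have `fhg = 0` and `p² = 0`, and
both inclusions are explicit:
`fh + pf = (1 + pa)·fh + b·pfg`, `pfg = g·(fh + pf)` and `fh = (1 - pa - bg)·(fh + pf)`.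
-/

theorem IsCoprime.of_map_of_isNilpotent_ker {R S : Type*} [CommRing R] [CommRing S]
    (φ : R →+* S) (hφ : Function.Surjective φ) (hker : ∀ x, φ x = 0 → IsNilpotent x) {a b : R}
    (hab : IsCoprime (φ a) (φ b)) : IsCoprime a b := by
  obtain ⟨u, v, huv⟩ := hab
  obtain ⟨u, rfl⟩ := hφ u
  obtain ⟨v, rfl⟩ := hφ v
  have hnil : IsNilpotent (u * a + v * b - 1) := hker _ (by simp [huv])
  obtain ⟨w, hw⟩ := hnil.isUnit_one_add.exists_left_inv
  exact ⟨w * u, w * v, by rw [← hw]; ring⟩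

theorem ZMod.isNilpotent_of_castHom_eq_zero {p k : ℕ} (hk : k ≠ 0) {x : ZMod (p ^ k)}
    (hx : ZMod.castHom (dvd_pow_self p hk) (ZMod p) x = 0) : IsNilpotent x := by
  rw [← ZMod.intCast_zmod_cast x, map_intCast, ZMod.intCast_zmod_eq_zero_iff_dvd] at hx
  obtain ⟨m, hm⟩ := hx
  refine ⟨k, ?_⟩
  rw [← ZMod.intCast_zmod_cast x, hm, Int.cast_mul, mul_pow, Int.cast_natCast, ← Nat.cast_pow,
    ZMod.natCast_self, zero_mul]

theorem Polynomial.isNilpotent_of_map_eq_zero {R S : Type*} [CommRing R] [Semiring S]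
    {φ : R →+* S} (hker : ∀ x, φ x = 0 → IsNilpotent x) {q : R[X]} (hq : q.map φ = 0) :
    IsNilpotent q :=
  Polynomial.isNilpotent_iff.2 fun i ↦ hker _ (by rw [← coeff_map, hq, coeff_zero])

theorem Polynomial.isCoprime_of_isCoprime_map_castHom {p k : ℕ} (hk : k ≠ 0)
    {a b : (ZMod (p ^ k))[X]}
    (hab : IsCoprime (a.map (ZMod.castHom (dvd_pow_self p hk) (ZMod p)))
      (b.map (ZMod.castHom (dvd_pow_self p hk) (ZMod p)))) :
    IsCoprime a b := by
  set φ := ZMod.castHom (dvd_pow_self p hk) (ZMod p)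
  refine IsCoprime.of_map_of_isNilpotent_ker (mapRingHom φ)
    (map_surjective φ (ZMod.ringHom_surjective φ)) (fun q hq ↦ ?_) hab
  exact isNilpotent_of_map_eq_zero (fun _ ↦ ZMod.isNilpotent_of_castHom_eq_zero hk) hq

theorem Polynomial.isCoprime_of_mul_dvd_X_pow_sub_one {K : Type*} [Field K] {n : ℕ}
    (hn : (n : K) ≠ 0) {h g : K[X]} (hdvd : h * g ∣ X ^ n - 1) : IsCoprime h g := by
  have hsep : (X ^ n - 1 : K[X]).Separable := by
    simpa using separable_X_pow_sub_C (1 : K) hn one_ne_zero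
  exact (hsep.of_dvd hdvd).isCoprime

theorem Ideal.span_singleton_mul_add_eq_span_pair {R : Type*} [CommRing R] {f h g P : R}
    (hhg : IsCoprime h g) (hP : P ^ 2 = 0) (hfhg : f * h * g = 0) :
    Ideal.span {f * h + P * f} = Ideal.span {f * h, P * f * g} := by
  obtain ⟨a, b, hab⟩ := hhg
  apply le_antisymm
  · rw [Ideal.span_singleton_le_iff_mem, Ideal.mem_span_pair]
    exact ⟨1 + P * a, b, by linear_combination (P * f) * hab⟩
  · rw [Ideal.span_le, Set.insert_subset_iff, Set.singleton_subset_iff]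
    refine ⟨Ideal.mem_span_singleton'.2 ⟨1 - P * a - b * g, ?_⟩,
      Ideal.mem_span_singleton'.2 ⟨g, ?_⟩⟩
    · linear_combination (-b) * hfhg - (P * f) * hab - (a * f) * hP
    · linear_combination hfhg

theorem span_fh_add_pf_general (p n : ℕ) (hp : p.Prime) (hco : Nat.Coprime n p)
    (f h g : Polynomial (ZMod (p ^ 2)))
    (hfac : f * h * g = X ^ n - 1) :
    Ideal.span {Qmk p n (f * h + (p : Polynomial (ZMod (p ^ 2))) * f)}
      = Ideal.span {Qmk p n (f * h), Qmk p n ((p : Polynomial (ZMod (p ^ 2))) * f * g)} := by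
  have := Fact.mk hp
  have hn : (n : ZMod p) ≠ 0 := by
    rw [Ne, ZMod.natCast_eq_zero_iff]
    exact (Nat.Prime.coprime_iff_not_dvd hp).1 hco.symm
  have hhg : IsCoprime h g := by
    refine isCoprime_of_isCoprime_map_castHom two_ne_zero
      (isCoprime_of_mul_dvd_X_pow_sub_one hn
        ⟨f.map (ZMod.castHom (dvd_pow_self p two_ne_zero) (ZMod p)), ?_⟩)
    rw [← Polynomial.map_mul, ← Polynomial.map_mul, mul_comm, ← mul_assoc, hfac]
    simp
  have hp2 : Qmk p n (p : Polynomial (ZMod (p ^ 2))) ^ 2 = 0 := by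
    rw [← map_pow, ← Nat.cast_pow, CharP.cast_eq_zero, map_zero]
  have hfhg : Qmk p n f * Qmk p n h * Qmk p n g = 0 := by
    rw [← map_mul, ← map_mul, hfac]
    exact Ideal.Quotient.mk_singleton_self _
  simpa only [map_add, map_mul] using
    Ideal.span_singleton_mul_add_eq_span_pair (hhg.map (Qmk p n)) hp2 hfhg

/-- in `ℤ_{p²}[x]/(xⁿ-1)` with `fhg = xⁿ-1`, `⟨fh + pf⟩ = ⟨fh, pfg⟩`. -/
theorem span_fh_add_pf (p n : ℕ) (hp : p.Prime) (hn : 0 < n) (hco : Nat.Coprime n p)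
    (f h g : Polynomial (ZMod (p ^ 2))) (hf : f.Monic) (hh : h.Monic) (hg : g.Monic)
    (hfac : f * h * g = X ^ n - 1) :
    Ideal.span {Qmk p n (f * h + (p : Polynomial (ZMod (p ^ 2))) * f)}
      = Ideal.span {Qmk p n (f * h), Qmk p n ((p : Polynomial (ZMod (p ^ 2))) * f * g)} :=
  span_fh_add_pf_general p n hp hco f h g hfac
end

section
/- Let p be prime, n coprime to p, and let C = ⟨fh + pf⟩ and C' = ⟨f'h' + pf'⟩ be ideals in ℤ_{p²}[x]/(xⁿ-1), where fhg = xⁿ-1 and f'h'g' = xⁿ-1 with all factors monic. If C ⊆ C', then f' divides f. -/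
/-!
Reduce modulo `p`, writing `f̄` for the image of `f` in `𝔽_p[x]`. Since `C ⊆ ⟨f'⟩`, `f̄' ∣ f̄ h̄`.
Multiplying the relation `fh + pf ≡ (f'h' + pf') u` by `g g'` turns both generators into
multiples of `p` modulo `xⁿ - 1`, and dividing by `p` gives `f̄' ∣ f̄ ḡ ḡ'`. As `xⁿ - 1` is
squarefree modulo `p`, `h̄, ḡ` and `f̄', ḡ'` are coprime, so `f̄' ∣ f̄`; hence `f̄'` is coprime to
`h̄ ḡ`. Coprimality lifts from `𝔽_p[x]` to `ℤ_{p²}[x]` because the kernel of reduction is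
nilpotent, and then `f' ∣ f h g` gives `f' ∣ f`.
-/

open Polynomial

theorem IsCoprime.of_map {A B : Type*} [CommRing A] [CommRing B] {φ : A →+* B}
    (hφ : Function.Surjective φ) (hker : ∀ x, φ x = 0 → IsNilpotent x) {a b : A}
    (h : IsCoprime (φ a) (φ b)) : IsCoprime a b := by
  obtain ⟨u', v', huv⟩ := h
  obtain ⟨u, rfl⟩ := hφ u'
  obtain ⟨v, rfl⟩ := hφ v'
  have hunit : IsUnit (u * a + v * b) := by
    simpa using (hker (u * a + v * b - 1) (by simp [huv])).isUnit_one_add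
  obtain ⟨w, hw⟩ := hunit.exists_left_inv
  exact ⟨w * u, w * v, by linear_combination hw⟩

theorem dvd_of_dvd_mul_of_dvd_mul_of_isCoprime {R : Type*} [CommRing R] {a b c d : R}
    (hc : a ∣ b * c) (hd : a ∣ b * d) (hcd : IsCoprime c d) : a ∣ b := by
  obtain ⟨u, v, huv⟩ := hcd
  have hb : b = u * (b * c) + v * (b * d) := by linear_combination -b * huv
  rw [hb]
  exact dvd_add (dvd_mul_of_dvd_right hc u) (dvd_mul_of_dvd_right hd v)

theorem Ideal.Quotient.exists_dvd_sub_mul_of_mk_mem_span_singleton {A : Type*} [CommRing A]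
    {N a b : A} (h : Ideal.Quotient.mk (Ideal.span {N}) a ∈
      Ideal.span {Ideal.Quotient.mk (Ideal.span {N}) b}) :
    ∃ u, N ∣ a - b * u := by
  obtain ⟨t, ht⟩ := Ideal.mem_span_singleton'.mp h
  obtain ⟨u, rfl⟩ := Ideal.Quotient.mk_surjective t
  refine ⟨u, Ideal.mem_span_singleton.mp (Ideal.Quotient.eq.mp ?_)⟩
  rw [map_mul, ← ht, mul_comm]

namespace Polynomial

theorem isNilpotent_of_map_eq_zero_s5 {A B : Type*} [CommRing A] [Semiring B]
    {φ : A →+* B} (hker : ∀ x, φ x = 0 → IsNilpotent x) {a : A[X]} (ha : a.map φ = 0) :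
    IsNilpotent a :=
  Polynomial.isNilpotent_iff.mpr fun i => hker _ (by rw [← coeff_map, ha, coeff_zero])

theorem dvd_of_map_dvd_of_separable {A B : Type*} [CommRing A] [CommRing B]
    {φ : A →+* B} (hφ : Function.Surjective φ) (hker : ∀ x, φ x = 0 → IsNilpotent x)
    {a b k : A[X]} (hdvd : a ∣ b * k) (hsep : (b.map φ * k.map φ).Separable)
    (hmap : a.map φ ∣ b.map φ) : a ∣ b := by
  have hcop : IsCoprime (a.map φ) (k.map φ) := hsep.isCoprime.of_isCoprime_of_dvd_left hmap
  have hcop' : IsCoprime a k :=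
    IsCoprime.of_map (φ := mapRingHom φ) (map_surjective φ hφ)
      (fun _ hx => isNilpotent_of_map_eq_zero_s5 hker hx) hcop
  exact hcop'.dvd_of_dvd_mul_right hdvd

theorem dvd_of_separable_of_dvd_mul {R : Type*} [CommRing R] {f h g f' h' g' : R[X]}
    (hsep : (f * h * g).Separable) (hfac : f' * h' * g' = f * h * g)
    (h₁ : f' ∣ f * h) (h₂ : f' ∣ f * g * g') : f' ∣ f := by
  have hhg : IsCoprime h g := by
    rw [mul_assoc] at hsep
    exact hsep.of_mul_right.isCoprime
  have hf'g' : IsCoprime f' g' := by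
    rw [← hfac, mul_right_comm] at hsep
    exact hsep.of_mul_left.isCoprime
  exact dvd_of_dvd_mul_of_dvd_mul_of_isCoprime h₁ (hf'g'.dvd_of_dvd_mul_right h₂) hhg

end Polynomial

namespace ZMod

section

variable {p k : ℕ} [NeZero p]

theorem castHom_eq_zero_iff_dvd (hk : k ≠ 0) (x : ZMod (p ^ k)) :
    castHom (dvd_pow_self p hk) (ZMod p) x = 0 ↔ (p : ZMod (p ^ k)) ∣ x := by
  constructor
  · intro hx
    rw [castHom_apply, ← natCast_val, natCast_eq_zero_iff] at hx
    obtain ⟨m, hm⟩ := hx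
    exact ⟨m, by rw [← natCast_zmod_val x, hm, Nat.cast_mul]⟩
  · rintro ⟨y, rfl⟩
    rw [map_mul, map_natCast, natCast_self, zero_mul]

theorem isNilpotent_of_castHom_eq_zero_s5 (hk : k ≠ 0) {x : ZMod (p ^ k)}
    (hx : castHom (dvd_pow_self p hk) (ZMod p) x = 0) : IsNilpotent x := by
  obtain ⟨y, rfl⟩ := (castHom_eq_zero_iff_dvd hk x).mp hx
  exact ⟨k, by rw [mul_pow, ← Nat.cast_pow, natCast_self, zero_mul]⟩

theorem map_castHom_eq_zero_iff_dvd (hk : k ≠ 0) (a : (ZMod (p ^ k))[X]) :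
    a.map (castHom (dvd_pow_self p hk) (ZMod p)) = 0 ↔ (p : (ZMod (p ^ k))[X]) ∣ a := by
  have hker : RingHom.ker (castHom (dvd_pow_self p hk) (ZMod p)) =
      Ideal.span {(p : ZMod (p ^ k))} := by
    ext x
    rw [RingHom.mem_ker, Ideal.mem_span_singleton, castHom_eq_zero_iff_dvd hk]
  rw [← coe_mapRingHom, ← RingHom.mem_ker, ker_mapRingHom, hker, Ideal.map_span,
    Set.image_singleton, Ideal.mem_span_singleton, map_natCast]

end

section Residue

variable {p : ℕ}

local notation "π" => Polynomial.map (castHom (dvd_pow_self p two_ne_zero) (ZMod p))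

theorem map_dvd_map_mul_of_dvd_sub {N f h f' h' u : (ZMod (p ^ 2))[X]} (hf'N : f' ∣ N)
    (hu : N ∣ f * h + (p : (ZMod (p ^ 2))[X]) * f
      - (f' * h' + (p : (ZMod (p ^ 2))[X]) * f') * u) :
    π f' ∣ π f * π h := by
  have hf'c' : f' ∣ (f' * h' + (p : (ZMod (p ^ 2))[X]) * f') * u :=
    dvd_mul_of_dvd_left (dvd_add (dvd_mul_right f' h') (dvd_mul_left f' _)) u
  have hf'c : f' ∣ f * h + (p : (ZMod (p ^ 2))[X]) * f := (dvd_sub_left hf'c').mp (hf'N.trans hu)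
  simpa only [Polynomial.map_add, Polynomial.map_mul, Polynomial.map_natCast, CharP.cast_eq_zero,
    zero_mul, add_zero] using
    Polynomial.map_dvd (castHom (dvd_pow_self p two_ne_zero) (ZMod p)) hf'c

variable [NeZero p]

theorem castHom_eq_zero_of_natCast_mul_eq_zero {x : ZMod (p ^ 2)}
    (hx : (p : ZMod (p ^ 2)) * x = 0) : castHom (dvd_pow_self p two_ne_zero) (ZMod p) x = 0 := by
  rw [← natCast_zmod_val x, ← Nat.cast_mul, natCast_eq_zero_iff] at hx
  rw [castHom_apply, ← natCast_val, natCast_eq_zero_iff]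
  exact (Nat.mul_dvd_mul_iff_left (NeZero.pos p)).mp (by simpa only [sq] using hx)

theorem map_castHom_eq_zero_of_natCast_mul_eq_zero {a : (ZMod (p ^ 2))[X]}
    (ha : (p : (ZMod (p ^ 2))[X]) * a = 0) : π a = 0 := by
  ext i
  rw [coeff_map, coeff_zero]
  exact castHom_eq_zero_of_natCast_mul_eq_zero (by rw [← coeff_natCast_mul, ha, coeff_zero])

theorem map_dvd_map_of_dvd_natCast_mul {N a : (ZMod (p ^ 2))[X]} (hN : N.Monic)
    (hdvd : N ∣ (p : (ZMod (p ^ 2))[X]) * a) : π N ∣ π a := by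
  obtain ⟨z, hz⟩ := hdvd
  have hz₀ : π z = 0 := by
    have := congrArg π hz
    rwa [Polynomial.map_mul, Polynomial.map_mul, Polynomial.map_natCast, CharP.cast_eq_zero,
      zero_mul, eq_comm, (hN.map _).mul_right_eq_zero_iff] at this
  obtain ⟨z₁, rfl⟩ := (map_castHom_eq_zero_iff_dvd two_ne_zero z).mp hz₀
  have hp : (p : (ZMod (p ^ 2))[X]) * (a - N * z₁) = 0 := by linear_combination hz
  refine ⟨π z₁, ?_⟩
  rw [← Polynomial.map_mul, ← sub_eq_zero, ← Polynomial.map_sub,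
    map_castHom_eq_zero_of_natCast_mul_eq_zero hp]

theorem map_dvd_map_mul_mul_of_dvd_sub {N f h g f' h' g' u : (ZMod (p ^ 2))[X]} (hN : N.Monic)
    (hfac : f * h * g = N) (hfac' : f' * h' * g' = N)
    (hu : N ∣ f * h + (p : (ZMod (p ^ 2))[X]) * f
      - (f' * h' + (p : (ZMod (p ^ 2))[X]) * f') * u) :
    π f' ∣ π f * π g * π g' := by
  -- multiplied by g g', both generators become multiples of p modulo N
  have htors : N ∣ (p : (ZMod (p ^ 2))[X]) * (f * g * g' - f' * (u * g * g')) := by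
    have hsum : N ∣ g * g' * (f * h + p * f - (f' * h' + p * f') * u) - g' * N + u * g * N :=
      dvd_add (dvd_sub (dvd_mul_of_dvd_right hu _) (dvd_mul_left N g')) (dvd_mul_left N _)
    convert hsum using 1
    linear_combination u * g * hfac' - g' * hfac
  have hf'N : π f' ∣ π N := Polynomial.map_dvd _ ⟨h' * g', by rw [← hfac', mul_assoc]⟩
  have := dvd_add (hf'N.trans (map_dvd_map_of_dvd_natCast_mul hN htors))
    (dvd_mul_right (π f') (π (u * g * g')))
  simpa only [Polynomial.map_sub, Polynomial.map_mul, sub_add_cancel] using this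

end Residue

end ZMod

theorem dvd_of_code_subset_general (p n : ℕ) (hp : p.Prime) (hn : 0 < n) (hco : Nat.Coprime n p)
    (f h g f' h' g' : Polynomial (ZMod (p ^ 2)))
    (hfac : f * h * g = X ^ n - 1) (hfac' : f' * h' * g' = X ^ n - 1)
    (hsub : Ideal.span {Qmk p n (f * h + (p : Polynomial (ZMod (p ^ 2))) * f)}
      ≤ Ideal.span {Qmk p n (f' * h' + (p : Polynomial (ZMod (p ^ 2))) * f')}) :
    f' ∣ f := by
  have : Fact p.Prime := ⟨hp⟩
  set r := ZMod.castHom (dvd_pow_self p two_ne_zero) (ZMod p)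
  have hN : (X ^ n - 1 : (ZMod (p ^ 2))[X]).Monic := by
    simpa using monic_X_pow_sub_C (1 : ZMod (p ^ 2)) hn.ne'
  have hsep : (f.map r * h.map r * g.map r).Separable := by
    rw [← Polynomial.map_mul, ← Polynomial.map_mul, hfac, Polynomial.map_sub, Polynomial.map_pow,
      map_X, Polynomial.map_one, X_pow_sub_one_separable_iff, Ne, ZMod.natCast_eq_zero_iff]
    exact hp.coprime_iff_not_dvd.mp hco.symm
  obtain ⟨u, hu⟩ := Ideal.Quotient.exists_dvd_sub_mul_of_mk_mem_span_singleton
    (hsub (Ideal.mem_span_singleton_self _))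
  have hdvd_fh : f'.map r ∣ f.map r * h.map r :=
    ZMod.map_dvd_map_mul_of_dvd_sub ⟨h' * g', by rw [← hfac', mul_assoc]⟩ hu
  have hdvd_fgg' : f'.map r ∣ f.map r * g.map r * g'.map r :=
    ZMod.map_dvd_map_mul_mul_of_dvd_sub hN hfac hfac' hu
  have hdvd_f : f'.map r ∣ f.map r :=
    Polynomial.dvd_of_separable_of_dvd_mul (h' := h'.map r) hsep
      (by simp only [← Polynomial.map_mul, hfac, hfac']) hdvd_fh hdvd_fgg'
  exact Polynomial.dvd_of_map_dvd_of_separable (ZMod.ringHom_surjective r)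
    (fun _ => ZMod.isNilpotent_of_castHom_eq_zero_s5 two_ne_zero) (k := h * g)
    ⟨h' * g', by rw [← mul_assoc, hfac, ← hfac', mul_assoc]⟩
    (by rwa [Polynomial.map_mul, ← mul_assoc]) hdvd_f

/-- if `C = ⟨fh + pf⟩ ⊆ C' = ⟨f'h' + pf'⟩` in `ℤ_{p²}[x]/(xⁿ-1)`,
then `f'` divides `f`. -/
theorem dvd_of_code_subset (p n : ℕ) (hp : p.Prime) (hn : 0 < n) (hco : Nat.Coprime n p)
    (f h g f' h' g' : Polynomial (ZMod (p ^ 2)))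
    (hf : f.Monic) (hh : h.Monic) (hg : g.Monic)
    (hf' : f'.Monic) (hh' : h'.Monic) (hg' : g'.Monic)
    (hfac : f * h * g = X ^ n - 1) (hfac' : f' * h' * g' = X ^ n - 1)
    (hsub : Ideal.span {Qmk p n (f * h + (p : Polynomial (ZMod (p ^ 2))) * f)}
      ≤ Ideal.span {Qmk p n (f' * h' + (p : Polynomial (ZMod (p ^ 2))) * f')}) :
    f' ∣ f :=
  dvd_of_code_subset_general p n hp hn hco f h g f' h' g' hfac hfac' hsub
end

section
/- Let p be an odd prime, and let 𝒞 be a ℤ_p ℤ_{p²}-additive cyclic code, i.e., an additive subgroup of ℤ_p^α × ℤ_{p²}^β closed under the simultaneous cyclic shift π(u', u'') = (cyclic shift of u', cyclic shift of u''). Then the kernel 𝒦(𝒞) = { u ∈ 𝒞 : p·P(u,v) ∈ 𝒞 for all v ∈ 𝒞 } is also closed under π, i.e., 𝒦(𝒞) is a ℤ_p ℤ_{p²}-additive cyclic code. -/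
/-- The ambient group `ℤ_p^α × ℤ_{p²}^β` of a `ℤ_p ℤ_{p²}`-additive code. -/
abbrev Amb (p α β : ℕ) := (Fin α → ZMod p) × (Fin β → ZMod (p ^ 2))

/-- The vector `p·P(u,v) = (0, (p·P(u₂ⱼ, v₂ⱼ))ⱼ)` of carries. -/
def carryVec {p α β : ℕ} (u v : Amb p α β) : Amb p α β :=
  (0, fun j => ((p * carry p (u.2 j) (v.2 j) : ℕ) : ZMod (p ^ 2)))

/-- The carry vector on the `ℤ_{p²}`-block alone: `(p·P(uⱼ, vⱼ))ⱼ`. -/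
def carryY {p β : ℕ} (u v : Fin β → ZMod (p ^ 2)) : Fin β → ZMod (p ^ 2) :=
  fun j => ((p * carry p (u j) (v j) : ℕ) : ZMod (p ^ 2))

/-- Cyclic shift `(u₀,…,u_{n-1}) ↦ (u_{n-1}, u₀, …, u_{n-2})`, i.e. `(π u)ᵢ = u_{i-1}`. -/
def cshift {n : ℕ} {M : Type*} (u : Fin n → M) : Fin n → M :=
  fun i => u ((finRotate n).symm i)

/-- Inverse cyclic shift, `(π⁻¹ u)ᵢ = u_{i+1}`. -/
def cshiftInv {n : ℕ} {M : Type*} (u : Fin n → M) : Fin n → M :=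
  fun i => u (finRotate n i)

/-- The simultaneous cyclic shift `π` on `ℤ_p^α × ℤ_{p²}^β`. -/
def shiftAmb {p α β : ℕ} (u : Amb p α β) : Amb p α β :=
  (cshift u.1, cshift u.2)

/-- The inverse simultaneous cyclic shift `π⁻¹`. -/
def shiftAmbInv {p α β : ℕ} (u : Amb p α β) : Amb p α β :=
  (cshiftInv u.1, cshiftInv u.2)

/-!
The shift `π` permutes the coordinates, so some iterate `π^[n]` with `n ≠ 0` is the identity;
hence `π⁻¹ = π^[n-1]`, and a cyclic code is also closed under `π⁻¹`. The carry vector is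
computed coordinatewise, so `pP(πu, πw) = π (pP(u, w))`. For `u ∈ 𝒦(𝒞)` and `v ∈ 𝒞`, taking
`w = π⁻¹ v ∈ 𝒞` gives `pP(πu, v) = π (pP(u, w)) ∈ 𝒞`.
-/

open Function Set

theorem Set.MapsTo.of_leftInverse_of_iterate_eq_id {X : Type*} {f g : X → X} {s : Set X}
    {n : ℕ} (hn : n ≠ 0) (hfn : f^[n] = id) (hgf : LeftInverse g f) (hf : MapsTo f s s) :
    MapsTo g s s := by
  obtain ⟨k, rfl⟩ := Nat.exists_eq_succ_of_ne_zero hn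
  intro x hx
  have hgx : g x = f^[k] x :=
    calc g x = g (f^[k + 1] x) := by rw [hfn, id]
      _ = g (f (f^[k] x)) := by rw [iterate_succ_apply']
      _ = f^[k] x := hgf _
  exact hgx ▸ hf.iterate k hx

theorem iterate_cshift {n : ℕ} {M : Type*} (m : ℕ) (u : Fin n → M) :
    cshift^[m] u = u ∘ ⇑((finRotate n).symm ^ m) := by
  induction m with
  | zero => rfl
  | succ m ih =>
    rw [iterate_succ_apply', ih, pow_succ, Equiv.Perm.coe_mul]
    rfl

theorem iterate_cshift_eq_id {n : ℕ} {M : Type*} {m : ℕ}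
    (hm : Fintype.card (Equiv.Perm (Fin n)) ∣ m) : (cshift : (Fin n → M) → Fin n → M)^[m] = id := by
  obtain ⟨k, rfl⟩ := hm
  funext u
  rw [iterate_cshift, pow_mul, pow_card_eq_one, one_pow, Equiv.Perm.coe_one, comp_id, id]

theorem exists_iterate_shiftAmb_eq_id (p α β : ℕ) :
    ∃ n ≠ 0, (shiftAmb : Amb p α β → Amb p α β)^[n] = id := by
  refine ⟨Fintype.card (Equiv.Perm (Fin α)) * Fintype.card (Equiv.Perm (Fin β)),
    (Nat.mul_pos Fintype.card_pos Fintype.card_pos).ne', ?_⟩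
  change (Prod.map cshift cshift)^[_] = id
  rw [Prod.map_iterate, iterate_cshift_eq_id (dvd_mul_right _ _),
    iterate_cshift_eq_id (dvd_mul_left _ _), Prod.map_id]

theorem cshiftInv_cshift {n : ℕ} {M : Type*} : LeftInverse (@cshiftInv n M) cshift :=
  fun u => funext fun i => congrArg u ((finRotate n).symm_apply_apply i)

theorem cshift_cshiftInv {n : ℕ} {M : Type*} : RightInverse (@cshiftInv n M) cshift :=
  fun u => funext fun i => congrArg u ((finRotate n).apply_symm_apply i)

theorem shiftAmbInv_shiftAmb {p α β : ℕ} : LeftInverse (@shiftAmbInv p α β) shiftAmb :=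
  fun u => Prod.ext (cshiftInv_cshift u.1) (cshiftInv_cshift u.2)

theorem shiftAmb_shiftAmbInv {p α β : ℕ} : RightInverse (@shiftAmbInv p α β) shiftAmb :=
  fun u => Prod.ext (cshift_cshiftInv u.1) (cshift_cshiftInv u.2)

theorem carryVec_shiftAmb {p α β : ℕ} (u v : Amb p α β) :
    carryVec (shiftAmb u) (shiftAmb v) = shiftAmb (carryVec u v) :=
  rfl

theorem kernel_cyclic_general (p α β : ℕ)
    (C : AddSubgroup (Amb p α β)) (hcyc : ∀ u ∈ C, shiftAmb u ∈ C) :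
    ∀ u : Amb p α β, (u ∈ C ∧ ∀ v ∈ C, carryVec u v ∈ C) →
      (shiftAmb u ∈ C ∧ ∀ v ∈ C, carryVec (shiftAmb u) v ∈ C) := by
  obtain ⟨n, hn, hper⟩ := exists_iterate_shiftAmb_eq_id p α β
  have hcycInv : MapsTo shiftAmbInv (C : Set (Amb p α β)) C :=
    MapsTo.of_leftInverse_of_iterate_eq_id hn hper shiftAmbInv_shiftAmb hcyc
  rintro u ⟨hu, hker⟩
  refine ⟨hcyc u hu, fun v hv => ?_⟩
  rw [← shiftAmb_shiftAmbInv v, carryVec_shiftAmb]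
  exact hcyc _ (hker _ (hcycInv hv))

/-- if `𝒞` is a `ℤ_p ℤ_{p²}`-additive cyclic code, then its kernel
`𝒦(𝒞) = { u ∈ 𝒞 : pP(u,v) ∈ 𝒞 ∀ v ∈ 𝒞 }` is also closed under the shift `π`. -/
theorem kernel_cyclic (p α β : ℕ) (hp : p.Prime) (hodd : Odd p)
    (C : AddSubgroup (Amb p α β)) (hcyc : ∀ u ∈ C, shiftAmb u ∈ C) :
    ∀ u : Amb p α β, (u ∈ C ∧ ∀ v ∈ C, carryVec u v ∈ C) →
      (shiftAmb u ∈ C ∧ ∀ v ∈ C, carryVec (shiftAmb u) v ∈ C) :=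
  kernel_cyclic_general p α β C hcyc
end

section
/- Let p be an odd prime and 𝒞 a ℤ_p ℤ_{p²}-additive code (a subgroup of ℤ_p^α × ℤ_{p²}^β). Then the kernel satisfies 𝒦(𝒞) ⊆ 𝒞_X × 𝒦(𝒞_Y), where 𝒞_X is the projection of 𝒞 to ℤ_p^α, 𝒞_Y its projection to ℤ_{p²}^β, and 𝒦(𝒞_Y) = { u₂ ∈ 𝒞_Y : p·P(u₂,v₂) ∈ 𝒞_Y for all v₂ ∈ 𝒞_Y }. -/
theorem carryVec_snd {p α β : ℕ} (u v : Amb p α β) : (carryVec u v).2 = carryY u.2 v.2 := rfl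

theorem kernel_subset_prod_general (p α β : ℕ)
    (C : AddSubgroup (Amb p α β)) :
    ∀ u : Amb p α β, (u ∈ C ∧ ∀ v ∈ C, carryVec u v ∈ C) →
      (u.1 ∈ Prod.fst '' (C : Set (Amb p α β)) ∧
        u.2 ∈ Prod.snd '' (C : Set (Amb p α β)) ∧
        ∀ v₂ ∈ Prod.snd '' (C : Set (Amb p α β)),
          carryY u.2 v₂ ∈ Prod.snd '' (C : Set (Amb p α β))) := by
  rintro u ⟨huC, hcarry⟩
  refine ⟨⟨u, huC, rfl⟩, ⟨u, huC, rfl⟩, ?_⟩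
  rintro _ ⟨v, hvC, rfl⟩
  exact ⟨carryVec u v, hcarry v hvC, carryVec_snd u v⟩

/-- `𝒦(𝒞) ⊆ 𝒞_X × 𝒦(𝒞_Y)`, where `𝒞_X`, `𝒞_Y` are the projections
of `𝒞` onto the two blocks. -/
theorem kernel_subset_prod (p α β : ℕ) (hp : p.Prime) (hodd : Odd p)
    (C : AddSubgroup (Amb p α β)) :
    ∀ u : Amb p α β, (u ∈ C ∧ ∀ v ∈ C, carryVec u v ∈ C) →
      (u.1 ∈ Prod.fst '' (C : Set (Amb p α β)) ∧
        u.2 ∈ Prod.snd '' (C : Set (Amb p α β)) ∧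
        ∀ v₂ ∈ Prod.snd '' (C : Set (Amb p α β)),
          carryY u.2 v₂ ∈ Prod.snd '' (C : Set (Amb p α β))) :=
  kernel_subset_prod_general p α β C
end

section
/- Let p be an odd prime and 𝒞 = 𝒞_X × 𝒞_Y a separable ℤ_p ℤ_{p²}-additive code (i.e., 𝒞 is the direct product of a linear code 𝒞_X ≤ ℤ_p^α and a linear code 𝒞_Y ≤ ℤ_{p²}^β). Then 𝒦(𝒞) = 𝒞_X × 𝒦(𝒞_Y). -/
theorem AddSubgroup.forall_mem_prod_iff_forall_snd_mem {G H : Type*} [AddGroup G] [AddGroup H]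
    {A : AddSubgroup G} {B : AddSubgroup H} {P : H → Prop} :
    (∀ v ∈ A.prod B, P v.2) ↔ ∀ v₂ ∈ B, P v₂ :=
  ⟨fun h v₂ hv₂ => h (0, v₂) ⟨A.zero_mem, hv₂⟩, fun h v hv => h v.2 hv.2⟩

theorem carryVec_mem_prod_iff {p α β : ℕ} {CX : AddSubgroup (Fin α → ZMod p)}
    {CY : AddSubgroup (Fin β → ZMod (p ^ 2))} (u v : Amb p α β) :
    carryVec u v ∈ CX.prod CY ↔ carryY u.2 v.2 ∈ CY :=
  and_iff_right CX.zero_mem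

theorem kernel_of_separable_general (p α β : ℕ)
    (CX : AddSubgroup (Fin α → ZMod p)) (CY : AddSubgroup (Fin β → ZMod (p ^ 2))) :
    {u : Amb p α β | u ∈ CX.prod CY ∧ ∀ v ∈ CX.prod CY, carryVec u v ∈ CX.prod CY}
      = (CX : Set (Fin α → ZMod p)) ×ˢ
          {u₂ : Fin β → ZMod (p ^ 2) | u₂ ∈ CY ∧ ∀ v₂ ∈ CY, carryY u₂ v₂ ∈ CY} := by
  ext u
  simp only [Set.mem_ofPred_eq, carryVec_mem_prod_iff, Set.mem_prod, SetLike.mem_coe]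
  rw [AddSubgroup.mem_prod, and_assoc]
  exact and_congr_right' (and_congr_right'
    (AddSubgroup.forall_mem_prod_iff_forall_snd_mem (P := (carryY u.2 · ∈ CY))))

/-- for a separable code `𝒞 = 𝒞_X × 𝒞_Y`, `𝒦(𝒞) = 𝒞_X × 𝒦(𝒞_Y)`. -/
theorem kernel_of_separable (p α β : ℕ) (hp : p.Prime) (hodd : Odd p)
    (CX : AddSubgroup (Fin α → ZMod p)) (CY : AddSubgroup (Fin β → ZMod (p ^ 2))) :
    {u : Amb p α β | u ∈ CX.prod CY ∧ ∀ v ∈ CX.prod CY, carryVec u v ∈ CX.prod CY}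
      = (CX : Set (Fin α → ZMod p)) ×ˢ
          {u₂ : Fin β → ZMod (p ^ 2) | u₂ ∈ CY ∧ ∀ v₂ ∈ CY, carryY u₂ v₂ ∈ CY} :=
  kernel_of_separable_general p α β CX CY
end

section
/- Let p be an odd prime, 𝒞 ≤ ℤ_p^α × ℤ_{p²}^β a ℤ_p ℤ_{p²}-additive code, and Φ the extended Gray map. Then the ℤ_p-linear span ⟨Φ(𝒞)⟩ is generated by the set Φ(𝒞) ∪ { Φ(p·P(w₁,w₂)) : w₁, w₂ ∈ 𝒞 }. In particular, Φ(𝒞) is a ℤ_p-linear subspace of ℤ_p^{α+pβ} if and only if p·P(u,v) ∈ 𝒞 for all u, v ∈ 𝒞. -/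
/-- The extended Gray map `Φ : ℤ_p^α × ℤ_{p²}^β → ℤ_p^{α+pβ}` (identity on the
first block, coordinatewise Gray map `φ` on the second block). -/
def grayExt {p α β : ℕ} (u : Amb p α β) : (Fin α ⊕ Fin β × Fin p) → ZMod p :=
  Sum.elim u.1 (fun x => gray p (u.2 x.1) x.2)

def AddSubmonoid.toZModSubmodule {M : Type*} [AddCommMonoid M] (n : ℕ) [NeZero n]
    [Module (ZMod n) M] (S : AddSubmonoid M) : Submodule (ZMod n) M where
  __ := S
  smul_mem' c x hx := by
    rw [← ZMod.natCast_zmod_val c, Nat.cast_smul_eq_nsmul]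
    exact S.nsmul_mem hx _

section Gray

variable {p : ℕ}

lemma gray_zero [NeZero p] : gray p 0 = 0 := by
  funext i
  simp [gray]

lemma gray_natCast_p_mul [NeZero p] (k : ℕ) :
    gray p ((p * k : ℕ) : ZMod (p ^ 2)) = fun _ => (k : ZMod p) := by
  have hp : 0 < p := Nat.pos_of_neZero p
  funext i
  rw [gray, ZMod.val_natCast, pow_two, Nat.mul_mod_mul_left, Nat.mul_div_cancel_left _ hp,
    Nat.mul_mod_right, ZMod.natCast_mod]
  simp

lemma carry_natCast_p_mul_right [NeZero p] (u : ZMod (p ^ 2)) (k : ℕ) :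
    carry p u ((p * k : ℕ) : ZMod (p ^ 2)) = 0 := by
  have hu := Nat.mod_lt u.val (Nat.pos_of_neZero p)
  rw [carry, ZMod.val_natCast, Nat.mod_mod_of_dvd _ (dvd_pow_self p two_ne_zero),
    Nat.mul_mod_right, if_neg (by omega)]

lemma gray_add [NeZero p] (u v : ZMod (p ^ 2)) :
    gray p (u + v) = gray p u + gray p v + gray p ((p * carry p u v : ℕ) : ZMod (p ^ 2)) := by
  have hp : 0 < p := Nat.pos_of_neZero p
  have hdiv : (u + v).val / p = (u.val / p + v.val / p + carry p u v) % p := by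
    rw [ZMod.val_add, carry]
    generalize u.val = a, v.val = b
    rw [pow_two, Nat.mod_mul_right_div_self, Nat.add_div hp]
  have hmod : (u + v).val % p = (u.val % p + v.val % p) % p := by
    rw [ZMod.val_add, Nat.mod_mod_of_dvd _ (dvd_pow_self p two_ne_zero), Nat.add_mod]
  funext i
  rw [Pi.add_apply, Pi.add_apply, gray_natCast_p_mul]
  simp only [gray, hdiv, hmod, ZMod.natCast_mod, Nat.cast_add]
  ring

lemma gray_injective (hp : 1 < p) : Function.Injective (gray p) := by
  have : NeZero p := ⟨by omega⟩
  intro u v h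
  have h0 := congrFun h ⟨0, by omega⟩
  have h1 := congrFun h ⟨1, hp⟩
  simp only [gray, Nat.cast_zero, Nat.cast_one, mul_zero, mul_one, add_zero] at h0 h1
  rw [h0, add_right_inj] at h1
  have hdigit {a b : ℕ} (ha : a < p) (hb : b < p) (hab : (a : ZMod p) = b) : a = b := by
    simpa [ZMod.val_natCast, Nat.mod_eq_of_lt ha, Nat.mod_eq_of_lt hb] using congrArg ZMod.val hab
  have hhigh {w : ZMod (p ^ 2)} : w.val / p < p :=
    Nat.div_lt_of_lt_mul (by simpa [pow_two] using w.val_lt)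
  refine ZMod.val_injective _ ?_
  rw [← Nat.div_add_mod u.val p, ← Nat.div_add_mod v.val p,
    hdigit hhigh hhigh h0, hdigit (Nat.mod_lt _ (by omega)) (Nat.mod_lt _ (by omega)) h1]

end Gray

section GrayExt

variable {p α β : ℕ}

lemma grayExt_zero [NeZero p] : grayExt (0 : Amb p α β) = 0 := by
  funext x
  cases x <;> simp [grayExt, gray_zero]

lemma grayExt_add [NeZero p] (u v : Amb p α β) :
    grayExt (u + v) = grayExt u + grayExt v + grayExt (carryVec u v) := by
  funext x
  cases x with
  | inl a => simp [grayExt, carryVec]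
  | inr b => simpa [grayExt, carryVec] using congrFun (gray_add (u.2 b.1) (v.2 b.1)) b.2

lemma carryVec_carryVec_right [NeZero p] (w u v : Amb p α β) :
    carryVec w (carryVec u v) = 0 := by
  simp only [carryVec, carry_natCast_p_mul_right, mul_zero, Nat.cast_zero]
  rfl

lemma grayExt_add_carryVec [NeZero p] (w u v : Amb p α β) :
    grayExt (w + carryVec u v) = grayExt w + grayExt (carryVec u v) := by
  rw [grayExt_add, carryVec_carryVec_right, grayExt_zero, add_zero]

lemma grayExt_injective (hp : 1 < p) : Function.Injective (grayExt (p := p) (α := α) (β := β)) :=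
  fun _ _ h => Prod.ext (funext fun a => congrFun h (.inl a))
    (funext fun j => gray_injective hp (funext fun i => congrFun h (.inr (j, i))))

end GrayExt

section Code

variable {p α β : ℕ} {C : AddSubgroup (Amb p α β)} {u v : Amb p α β}

lemma grayExt_carryVec_mem_span [NeZero p] (hu : u ∈ C) (hv : v ∈ C) :
    grayExt (carryVec u v) ∈ Submodule.span (ZMod p) (grayExt '' (C : Set (Amb p α β))) := by
  have hdiff : grayExt (carryVec u v) = grayExt (u + v) - grayExt u - grayExt v := by
    rw [grayExt_add]; abel
  rw [hdiff]
  exact sub_mem (sub_mem (Submodule.subset_span ⟨_, C.add_mem hu hv, rfl⟩)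
    (Submodule.subset_span ⟨_, hu, rfl⟩)) (Submodule.subset_span ⟨_, hv, rfl⟩)

lemma carryVec_mem_of_grayExt_add_mem (hp : 1 < p) (hu : u ∈ C) (hv : v ∈ C)
    (huv : grayExt u + grayExt v ∈ grayExt '' (C : Set (Amb p α β))) : carryVec u v ∈ C := by
  have : NeZero p := ⟨by omega⟩
  obtain ⟨w, hw, hwuv⟩ := huv
  have hsum : w + carryVec u v = u + v := grayExt_injective hp <| by
    rw [grayExt_add_carryVec, hwuv, grayExt_add]
  rw [← add_sub_cancel_left w (carryVec u v), hsum]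
  exact C.sub_mem (C.add_mem hu hv) hw

lemma grayExt_add_mem_of_carryVec_mem [NeZero p] (hu : u ∈ C) (hv : v ∈ C)
    (hc : carryVec u v ∈ C) : grayExt u + grayExt v ∈ grayExt '' (C : Set (Amb p α β)) := by
  refine ⟨u + v - carryVec u v, C.sub_mem (C.add_mem hu hv) hc,
    add_right_cancel (b := grayExt (carryVec u v)) ?_⟩
  rw [← grayExt_add_carryVec, sub_add_cancel, grayExt_add]

end Code

theorem span_gray_image_general (p α β : ℕ) (hp : p.Prime)
    (C : AddSubgroup (Amb p α β)) :
    Submodule.span (ZMod p) (grayExt '' (C : Set (Amb p α β)))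
      = Submodule.span (ZMod p)
          (grayExt '' (C : Set (Amb p α β)) ∪
            grayExt '' {x : Amb p α β | ∃ w₁ ∈ C, ∃ w₂ ∈ C, x = carryVec w₁ w₂}) ∧
    ((∃ W : Submodule (ZMod p) ((Fin α ⊕ Fin β × Fin p) → ZMod p),
        (W : Set ((Fin α ⊕ Fin β × Fin p) → ZMod p)) = grayExt '' (C : Set (Amb p α β)))
      ↔ ∀ u ∈ C, ∀ v ∈ C, carryVec u v ∈ C) := by
  have : NeZero p := ⟨hp.ne_zero⟩
  refine ⟨le_antisymm (Submodule.span_mono Set.subset_union_left) ?_, ⟨?_, fun h => ?_⟩⟩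
  · refine Submodule.span_le.mpr (Set.union_subset Submodule.subset_span ?_)
    rintro _ ⟨_, ⟨u, hu, v, hv, rfl⟩, rfl⟩
    exact grayExt_carryVec_mem_span hu hv
  · rintro ⟨W, hW⟩ u hu v hv
    have hmem {w} (hw : w ∈ C) : grayExt w ∈ (W : Set _) := hW ▸ ⟨w, hw, rfl⟩
    exact carryVec_mem_of_grayExt_add_mem hp.one_lt hu hv (hW ▸ W.add_mem (hmem hu) (hmem hv))
  · let S : AddSubmonoid ((Fin α ⊕ Fin β × Fin p) → ZMod p) :=
      { carrier := grayExt '' (C : Set (Amb p α β))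
        zero_mem' := ⟨0, C.zero_mem, grayExt_zero⟩
        add_mem' := by
          rintro _ _ ⟨u, hu, rfl⟩ ⟨v, hv, rfl⟩
          exact grayExt_add_mem_of_carryVec_mem hu hv (h u hu v hv) }
    exact ⟨S.toZModSubmodule p, rfl⟩

/-- the span of `Φ(𝒞)` is generated by `Φ(𝒞)` together with the
Gray images of the carry vectors; and `Φ(𝒞)` is linear iff `pP(u,v) ∈ 𝒞` for
all `u, v ∈ 𝒞`. -/
theorem span_gray_image (p α β : ℕ) (hp : p.Prime) (hodd : Odd p)
    (C : AddSubgroup (Amb p α β)) :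
    Submodule.span (ZMod p) (grayExt '' (C : Set (Amb p α β)))
      = Submodule.span (ZMod p)
          (grayExt '' (C : Set (Amb p α β)) ∪
            grayExt '' {x : Amb p α β | ∃ w₁ ∈ C, ∃ w₂ ∈ C, x = carryVec w₁ w₂}) ∧
    ((∃ W : Submodule (ZMod p) ((Fin α ⊕ Fin β × Fin p) → ZMod p),
        (W : Set ((Fin α ⊕ Fin β × Fin p) → ZMod p)) = grayExt '' (C : Set (Amb p α β)))
      ↔ ∀ u ∈ C, ∀ v ∈ C, carryVec u v ∈ C) :=
  span_gray_image_general p α β hp C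
end

section
/- Let p be a prime and u ∈ ℤ_{p²}^β an element with p·u = 0 (order dividing p). Then for every positive integer i with 0 ≤ i < p, the Gray map satisfies Φ(i·u) = i·Φ(u), where Φ: ℤ_{p²}^β → ℤ_p^{pβ} applies φ coordinatewise. -/
theorem ZMod.exists_eq_natCast_mul_of_natCast_mul_eq_zero {p : ℕ} (hp : 0 < p)
    {θ : ZMod (p ^ 2)} (h : (p : ZMod (p ^ 2)) * θ = 0) :
    ∃ c : ℕ, θ = ((p * c : ℕ) : ZMod (p ^ 2)) := by
  have : NeZero (p ^ 2) := ⟨by positivity⟩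
  have hdvd : p * p ∣ p * θ.val := by
    rw [← pow_two, ← ZMod.natCast_eq_zero_iff, Nat.cast_mul, ZMod.natCast_val, ZMod.cast_id',
      id, h]
  obtain ⟨c, hc⟩ := (Nat.mul_dvd_mul_iff_left hp).mp hdvd
  exact ⟨c, by rw [← hc, ZMod.natCast_zmod_val]⟩

theorem gray_natCast_mul_apply {p : ℕ} (c : ℕ) (k : Fin p) :
    gray p ((p * c : ℕ) : ZMod (p ^ 2)) k = c := by
  have hval : ((p * c : ℕ) : ZMod (p ^ 2)).val = p * (c % p) := by
    rw [ZMod.val_natCast, pow_two, Nat.mul_mod_mul_left]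
  rw [gray, hval, Nat.mul_div_cancel_left _ k.pos, Nat.mul_mod_right, ZMod.natCast_mod]
  simp

theorem grayVec_nsmul_general (p β : ℕ) (u : Fin β → ZMod (p ^ 2))
    (hu : ∀ j, (p : ZMod (p ^ 2)) * u j = 0) (i : ℕ) :
    (fun x : Fin β × Fin p => gray p (i • u x.1) x.2)
      = fun x : Fin β × Fin p => i • gray p (u x.1) x.2 := by
  funext ⟨j, k⟩
  obtain ⟨c, hc⟩ := ZMod.exists_eq_natCast_mul_of_natCast_mul_eq_zero k.pos (hu j)
  have hsmul : i • u j = ((p * (i * c) : ℕ) : ZMod (p ^ 2)) := by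
    rw [hc]; push_cast; ring
  dsimp only
  rw [hsmul, hc, gray_natCast_mul_apply, gray_natCast_mul_apply, nsmul_eq_mul, Nat.cast_mul]

/-- for `u ∈ ℤ_{p²}^β` with `p·u = 0` and `0 < i < p`,
`Φ(i·u) = i·Φ(u)`, where `Φ` applies `φ` coordinatewise. -/
theorem grayVec_nsmul (p β : ℕ) (hp : p.Prime) (u : Fin β → ZMod (p ^ 2))
    (hu : ∀ j, (p : ZMod (p ^ 2)) * u j = 0) (i : ℕ) (hi0 : 0 < i) (hip : i < p) :
    (fun x : Fin β × Fin p => gray p (i • u x.1) x.2)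
      = fun x : Fin β × Fin p => i • gray p (u x.1) x.2 :=
  grayVec_nsmul_general p β u hu i
end

section
/- Let p be prime, n coprime to p, and f, h, g monic polynomials over ℤ_{p²} with fhg = xⁿ - 1. In ℤ_{p²}[x]/(xⁿ-1), the subcode of order-p elements of the cyclic code C = ⟨fh + pf⟩ (i.e., { c ∈ C : p·c = 0 }) equals the ideal ⟨pf⟩. -/
/-! Modulo `xⁿ - 1` we have `fhg = 0` and `p² = 0`. As `xⁿ - 1` is separable modulo `p`, the
factors `h` and `g` are coprime modulo `p`, and a lifted Bézout identity `λh + μg = 1 + ps` gives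
`pf = (fh + pf)(pλ + μg)` in the quotient; so `⟨pf⟩ ⊆ C`, and `p` kills `⟨pf⟩`. Conversely, if
`p (fh + pf) u = p fh u` vanishes, cancelling the non-zero-divisor `fh` (a factor of the monic
`xⁿ - 1`) gives `g ∣ pu`; reducing modulo `p`, where `g` stays nonzero, yields `u ∈ (p, g)`, and
then `(fh + pf) u ∈ ⟨pf⟩`. -/

open Polynomial

abbrev reduceModP (p : ℕ) : ZMod (p ^ 2) →+* ZMod p :=
  ZMod.castHom (dvd_pow_self p two_ne_zero) (ZMod p)

theorem natCast_mul_self_eq_zero (p : ℕ) {A : Type*} [Semiring A] [Algebra (ZMod (p ^ 2)) A] :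
    (p : A) * p = 0 := by
  rw [← Nat.cast_mul, ← pow_two, ← map_natCast (algebraMap (ZMod (p ^ 2)) A),
    ZMod.natCast_self, map_zero]

section ZModSq

variable {p : ℕ}

theorem natCast_mul_eq_zero_of_mem_span_natCast_mul {A : Type*} [CommRing A]
    [Algebra (ZMod (p ^ 2)) A] {x y : A} (hx : x ∈ Ideal.span {(p : A) * y}) :
    (p : A) * x = 0 := by
  obtain ⟨d, rfl⟩ := Ideal.mem_span_singleton'.1 hx
  linear_combination (d * y) * natCast_mul_self_eq_zero p (A := A)

theorem reduceModP_eq_zero_iff (c : ZMod (p ^ 2)) :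
    reduceModP p c = 0 ↔ (p : ZMod (p ^ 2)) ∣ c := by
  constructor
  · intro hc
    rw [← ZMod.intCast_zmod_cast c, map_intCast, ZMod.intCast_zmod_eq_zero_iff_dvd] at hc
    obtain ⟨k, hk⟩ := hc
    exact ⟨k, by rw [← ZMod.intCast_zmod_cast c, hk]; push_cast; rfl⟩
  · rintro ⟨d, rfl⟩
    simp

theorem natCast_mul_eq_zero_iff_reduceModP_eq_zero [NeZero p] (c : ZMod (p ^ 2)) :
    (p : ZMod (p ^ 2)) * c = 0 ↔ reduceModP p c = 0 := by
  rw [← ZMod.intCast_zmod_cast c, map_intCast, ZMod.intCast_zmod_eq_zero_iff_dvd,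
    ← Int.cast_natCast (R := ZMod (p ^ 2)) p, ← Int.cast_mul, ZMod.intCast_zmod_eq_zero_iff_dvd,
    Nat.cast_pow, pow_two]
  exact mul_dvd_mul_iff_left (by exact_mod_cast NeZero.ne p)

end ZModSq

namespace Polynomial

variable {p : ℕ}

theorem map_reduceModP_eq_zero_iff (a : (ZMod (p ^ 2))[X]) :
    a.map (reduceModP p) = 0 ↔ (p : (ZMod (p ^ 2))[X]) ∣ a := by
  rw [← map_natCast C, C_dvd_iff_dvd_coeff, Polynomial.ext_iff]
  simp only [coeff_map, coeff_zero, reduceModP_eq_zero_iff]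

theorem natCast_mul_eq_zero_iff_dvd [NeZero p] (a : (ZMod (p ^ 2))[X]) :
    (p : (ZMod (p ^ 2))[X]) * a = 0 ↔ (p : (ZMod (p ^ 2))[X]) ∣ a := by
  rw [← map_reduceModP_eq_zero_iff, Polynomial.ext_iff, Polynomial.ext_iff]
  simp only [coeff_natCast_mul, coeff_map, coeff_zero, natCast_mul_eq_zero_iff_reduceModP_eq_zero]

theorem exists_eq_natCast_mul_add_mul_of_dvd_natCast_mul [Fact p.Prime]
    {g u : (ZMod (p ^ 2))[X]} (hg : g.map (reduceModP p) ≠ 0)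
    (hgu : g ∣ (p : (ZMod (p ^ 2))[X]) * u) :
    ∃ r t, u = (p : (ZMod (p ^ 2))[X]) * r + g * t := by
  obtain ⟨w, hw⟩ := hgu
  have hw_mod : g.map (reduceModP p) * w.map (reduceModP p) = 0 := by
    simpa [Polynomial.map_mul, eq_comm] using congrArg (map (reduceModP p)) hw
  obtain ⟨t, rfl⟩ := (map_reduceModP_eq_zero_iff w).1 ((mul_eq_zero.1 hw_mod).resolve_left hg)
  obtain ⟨r, hr⟩ := (natCast_mul_eq_zero_iff_dvd (u - g * t)).1 (by linear_combination hw)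
  exact ⟨r, t, by linear_combination hr⟩

theorem exists_mul_add_mul_eq_one_add_natCast_mul {h g : (ZMod (p ^ 2))[X]}
    (hhg : IsCoprime (h.map (reduceModP p)) (g.map (reduceModP p))) :
    ∃ a b s, a * h + b * g = 1 + (p : (ZMod (p ^ 2))[X]) * s := by
  obtain ⟨a', b', hab'⟩ := hhg
  have hsurj := map_surjective _ (ZMod.ringHom_surjective (reduceModP p))
  obtain ⟨a, rfl⟩ := hsurj a'
  obtain ⟨b, rfl⟩ := hsurj b'
  obtain ⟨s, hs⟩ := (map_reduceModP_eq_zero_iff (a * h + b * g - 1)).1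
    (by simp [Polynomial.map_mul, hab'])
  exact ⟨a, b, s, by linear_combination hs⟩

theorem isCoprime_and_ne_zero_of_mul_mul_eq_X_pow_sub_one {K : Type*} [Field K] {n : ℕ}
    (hn : (n : K) ≠ 0) {f h g : K[X]} (hfac : f * h * g = X ^ n - 1) :
    IsCoprime h g ∧ g ≠ 0 := by
  have hsep : (h * g).Separable := by
    refine Separable.of_mul_right (f := f) ?_
    rw [← mul_assoc, hfac]
    exact X_pow_sub_one_separable_iff.2 hn
  exact ⟨hsep.isCoprime, right_ne_zero_of_mul hsep.ne_zero⟩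

end Polynomial

section CyclicCode

variable {p n : ℕ}

local notation "𝓡" => (ZMod (p ^ 2))[X] ⧸ Ideal.span {(X : (ZMod (p ^ 2))[X]) ^ n - 1}

theorem Qmk_eq_zero_iff (a : (ZMod (p ^ 2))[X]) : Qmk p n a = 0 ↔ X ^ n - 1 ∣ a :=
  Ideal.Quotient.eq_zero_iff_mem.trans Ideal.mem_span_singleton

theorem Qmk_mul_mul_eq_zero {f h g : (ZMod (p ^ 2))[X]} (hfac : f * h * g = X ^ n - 1) :
    Qmk p n f * Qmk p n h * Qmk p n g = 0 := by
  rw [← map_mul, ← map_mul, Qmk_eq_zero_iff, hfac]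

theorem Qmk_mul_add_natCast_mul_dvd {f h g a b s : (ZMod (p ^ 2))[X]}
    (hfac : f * h * g = X ^ n - 1)
    (hbez : a * h + b * g = 1 + (p : (ZMod (p ^ 2))[X]) * s) :
    Qmk p n (f * h + (p : (ZMod (p ^ 2))[X]) * f) ∣ Qmk p n ((p : (ZMod (p ^ 2))[X]) * f) := by
  refine ⟨Qmk p n ((p : (ZMod (p ^ 2))[X]) * a + b * g), ?_⟩
  have hbez' := congrArg (Qmk p n) hbez
  simp only [map_add, map_mul, map_natCast, map_one] at hbez' ⊢
  linear_combination -(p * Qmk p n f) * hbez'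
    - (Qmk p n f * (Qmk p n s + Qmk p n a)) * natCast_mul_self_eq_zero p (A := 𝓡)
    - Qmk p n b * Qmk_mul_mul_eq_zero hfac

theorem mem_span_Qmk_natCast_mul_of_natCast_mul_eq_zero [Fact p.Prime]
    {f h g : (ZMod (p ^ 2))[X]} (hn : n ≠ 0) (hfac : f * h * g = X ^ n - 1)
    (hg : g.map (reduceModP p) ≠ 0) {c : 𝓡}
    (hc : c ∈ Ideal.span {Qmk p n (f * h + (p : (ZMod (p ^ 2))[X]) * f)}) (hpc : (p : 𝓡) * c = 0) :
    c ∈ Ideal.span {Qmk p n ((p : (ZMod (p ^ 2))[X]) * f)} := by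
  obtain ⟨d, rfl⟩ := Ideal.mem_span_singleton'.1 hc
  obtain ⟨u, rfl⟩ := Ideal.Quotient.mk_surjective d
  have hpp := natCast_mul_self_eq_zero p (A := (ZMod (p ^ 2))[X])
  have hgu : g ∣ (p : (ZMod (p ^ 2))[X]) * u := by
    have hpu : Qmk p n (p * u * (f * h + p * f)) = 0 := by
      rw [map_mul, map_mul, map_natCast, ← hpc, mul_assoc]
      rfl
    obtain ⟨w, hw⟩ := (Qmk_eq_zero_iff _).1 hpu
    have hmonic : (f * h * g).Monic := by
      simpa [hfac] using monic_X_pow_sub_C (1 : ZMod (p ^ 2)) hn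
    have hfhg : f * h * g * (p * u - g * w) = 0 := by
      linear_combination g * hw - g * w * hfac - g * u * f * hpp
    exact ⟨w, by linear_combination hmonic.mul_right_eq_zero_iff.1 hfhg⟩
  obtain ⟨r, t, rfl⟩ := exists_eq_natCast_mul_add_mul_of_dvd_natCast_mul hg hgu
  refine Ideal.mem_span_singleton'.2 ⟨Qmk p n (h * r + g * t), ?_⟩
  change _ = Qmk p n _ * _
  simp only [map_add, map_mul, map_natCast]
  linear_combination -(Qmk p n r * Qmk p n f) * natCast_mul_self_eq_zero p (A := 𝓡)
    - Qmk p n t * Qmk_mul_mul_eq_zero hfac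

end CyclicCode

theorem order_p_subcode_general (p n : ℕ) (hp : p.Prime) (hco : Nat.Coprime n p)
    (f h g : Polynomial (ZMod (p ^ 2)))
    (hfac : f * h * g = X ^ n - 1) :
    ∀ c : Polynomial (ZMod (p ^ 2)) ⧸ Ideal.span {(X : Polynomial (ZMod (p ^ 2))) ^ n - 1},
      (c ∈ Ideal.span {Qmk p n (f * h + (p : Polynomial (ZMod (p ^ 2))) * f)} ∧
          (p : Polynomial (ZMod (p ^ 2)) ⧸ Ideal.span {(X : Polynomial (ZMod (p ^ 2))) ^ n - 1}) * c = 0)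
        ↔ c ∈ Ideal.span {Qmk p n ((p : Polynomial (ZMod (p ^ 2))) * f)} := by
  have := Fact.mk hp
  have hn : (n : ZMod p) ≠ 0 := by
    rw [Ne, ZMod.natCast_eq_zero_iff]
    exact hp.coprime_iff_not_dvd.1 hco.symm
  obtain ⟨hhg, hg⟩ := isCoprime_and_ne_zero_of_mul_mul_eq_X_pow_sub_one hn
    (by simpa using congrArg (map (reduceModP p)) hfac)
  obtain ⟨a, b, s, hbez⟩ := exists_mul_add_mul_eq_one_add_natCast_mul hhg
  intro c
  refine ⟨fun ⟨hc, hpc⟩ ↦ ?_, fun hc ↦ ⟨?_, ?_⟩⟩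
  · exact mem_span_Qmk_natCast_mul_of_natCast_mul_eq_zero (by rintro rfl; simp at hn) hfac hg
      hc hpc
  · exact Ideal.span_singleton_le_span_singleton.2 (Qmk_mul_add_natCast_mul_dvd hfac hbez) hc
  · exact natCast_mul_eq_zero_of_mem_span_natCast_mul
      (by simpa only [map_mul, map_natCast] using hc)

/-- the subcode of order-`p` elements of `C = ⟨fh + pf⟩` in
`ℤ_{p²}[x]/(xⁿ-1)` equals the ideal `⟨pf⟩`. -/
theorem order_p_subcode (p n : ℕ) (hp : p.Prime) (hn : 0 < n) (hco : Nat.Coprime n p)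
    (f h g : Polynomial (ZMod (p ^ 2))) (hf : f.Monic) (hh : h.Monic) (hg : g.Monic)
    (hfac : f * h * g = X ^ n - 1) :
    ∀ c : Polynomial (ZMod (p ^ 2)) ⧸ Ideal.span {(X : Polynomial (ZMod (p ^ 2))) ^ n - 1},
      (c ∈ Ideal.span {Qmk p n (f * h + (p : Polynomial (ZMod (p ^ 2))) * f)} ∧
          (p : Polynomial (ZMod (p ^ 2)) ⧸ Ideal.span {(X : Polynomial (ZMod (p ^ 2))) ^ n - 1}) * c = 0)
        ↔ c ∈ Ideal.span {Qmk p n ((p : Polynomial (ZMod (p ^ 2))) * f)} :=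
  order_p_subcode_general p n hp hco f h g hfac
end

section
/- Let p be an odd prime, n a prime with p a primitive root modulo n, and consider the cyclic code C = ⟨x - 1⟩ in ℤ_{p²}[x]/(xⁿ-1). Then the Gray image Φ(C) is not a ℤ_p-linear code; equivalently, there exist u, v ∈ C with p·P(u,v) ∉ C. -/
open Polynomial

/-!
Evaluation at `1` is well defined on `R[X]/(Xⁿ - 1)` and kills the ideal `⟨X - 1⟩`. For
`u = v = 1 - X` the digits `a.val % p` of the coefficients are `1` at position `0` and `p - 1`
at position `1`, so (as `p` is odd) the only carry is at position `1` and the carry vector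
`p·P(u,v)` is `p·X`.
It evaluates to `p ≠ 0` in `ℤ_{p²}`, hence lies outside `⟨X - 1⟩`.
-/

section EvalOne

variable {R : Type*} [CommRing R] (n : ℕ)

noncomputable def evalOneQuotient : R[X] ⧸ Ideal.span {(X : R[X]) ^ n - 1} →+* R :=
  Ideal.Quotient.lift _ (evalRingHom 1) fun f hf =>
    eval_eq_zero_of_dvd_of_eval_eq_zero (Ideal.mem_span_singleton.mp hf) (by simp)

@[simp]
theorem evalOneQuotient_mk (f : R[X]) : evalOneQuotient n (Ideal.Quotient.mk _ f) = f.eval 1 :=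
  Ideal.Quotient.lift_mk _ _ _

theorem eval_one_eq_zero_of_mk_mem_span_X_sub_one {f : R[X]}
    (hf : Ideal.Quotient.mk _ f ∈
      Ideal.span {Ideal.Quotient.mk (Ideal.span {(X : R[X]) ^ n - 1}) (X - 1)}) :
    f.eval 1 = 0 := by
  have h := map_dvd (evalOneQuotient n) (Ideal.mem_span_singleton.mp hf)
  simpa using h

end EvalOne

theorem ZMod.val_mod_eq_val_cast {m : ℕ} [NeZero m] {p : ℕ} (a : ZMod m) :
    a.val % p = (a.cast : ZMod p).val := by
  rw [ZMod.cast_eq_val, ZMod.val_natCast]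

theorem val_coeff_one_sub_X_mod {p : ℕ} (hp : 1 < p) (j : ℕ) :
    ((1 - X : (ZMod (p ^ 2))[X]).coeff j).val % p =
      if j = 0 then 1 else if j = 1 then p - 1 else 0 := by
  have : NeZero (p ^ 2) := ⟨by positivity⟩
  have : Fact (1 < p) := ⟨hp⟩
  have hdvd : p ∣ p ^ 2 := dvd_pow_self p two_ne_zero
  rw [ZMod.val_mod_eq_val_cast]
  rcases j with _ | _ | j
  · simp [ZMod.cast_one hdvd, ZMod.val_one]
  · simp [coeff_one, coeff_X, ZMod.cast_neg hdvd, ZMod.cast_one hdvd, ZMod.val_neg_of_ne_zero,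
      ZMod.val_one]
  · simp [coeff_one, coeff_X]

theorem carry_one_sub_X_iff {p : ℕ} (hp : 3 ≤ p) (j : ℕ) :
    p ≤ ((1 - X : (ZMod (p ^ 2))[X]).coeff j).val % p +
      ((1 - X : (ZMod (p ^ 2))[X]).coeff j).val % p ↔ j = 1 := by
  rw [val_coeff_one_sub_X_mod (by omega)]
  split_ifs <;> omega

theorem gray_image_not_linear_general (p n : ℕ) (hp : p.Prime) (hodd : Odd p) (hn : n.Prime) :
    ∃ u v : Polynomial (ZMod (p ^ 2)),
      Qmk p n u ∈ Ideal.span {Qmk p n (X - 1)} ∧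
      Qmk p n v ∈ Ideal.span {Qmk p n (X - 1)} ∧
      Qmk p n (∑ j ∈ Finset.range n,
          Polynomial.C ((p : ZMod (p ^ 2)) *
            (if p ≤ (u.coeff j).val % p + (v.coeff j).val % p then 1 else 0)) * X ^ j)
        ∉ Ideal.span {Qmk p n (X - 1)} := by
  have hp3 : 3 ≤ p := by
    have := hp.two_le
    obtain ⟨k, hk⟩ := hodd
    omega
  have hmem : Qmk p n (1 - X) ∈ Ideal.span {Qmk p n (X - 1)} := by
    rw [← neg_sub X 1, map_neg]
    exact neg_mem (Ideal.mem_span_singleton_self _)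
  refine ⟨1 - X, 1 - X, hmem, hmem, fun hcarry => ?_⟩
  have h := eval_one_eq_zero_of_mk_mem_span_X_sub_one n hcarry
  simp only [eval_finsetSum, eval_mul, eval_C, eval_pow, eval_X, one_pow, mul_one,
    carry_one_sub_X_iff hp3, mul_ite, mul_zero, Finset.sum_ite_eq',
    Finset.mem_range.mpr hn.two_le, if_true] at h
  have hsq_le : p ^ 2 ≤ p := Nat.le_of_dvd hp.pos ((ZMod.natCast_eq_zero_iff p (p ^ 2)).mp h)
  nlinarith

/-- for `p` an odd prime and `n` prime with `p` a primitive root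
modulo `n`, the Gray image of `C = ⟨x-1⟩ ⊆ ℤ_{p²}[x]/(xⁿ-1)` is not linear:
there exist `u, v ∈ C` whose carry vector `pP(u,v)` is not in `C`. -/
theorem gray_image_not_linear (p n : ℕ) (hp : p.Prime) (hodd : Odd p) (hn : n.Prime)
    (hord : orderOf ((p : ZMod n)) = n - 1) :
    ∃ u v : Polynomial (ZMod (p ^ 2)),
      Qmk p n u ∈ Ideal.span {Qmk p n (X - 1)} ∧
      Qmk p n v ∈ Ideal.span {Qmk p n (X - 1)} ∧
      Qmk p n (∑ j ∈ Finset.range n,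
          Polynomial.C ((p : ZMod (p ^ 2)) *
            (if p ≤ (u.coeff j).val % p + (v.coeff j).val % p then 1 else 0)) * X ^ j)
        ∉ Ideal.span {Qmk p n (X - 1)} :=
  gray_image_not_linear_general p n hp hodd hn
end

section
/- Let p be prime, n coprime to p, and C = ⟨fh + pf⟩ ⊆ ℤ_{p²}[x]/(xⁿ-1) a cyclic code with fhg = xⁿ-1 (monic factors). Then as an abelian group, C ≅ (ℤ_{p²})^{deg g} × (ℤ_p)^{deg h}; in particular |C| = p^{2·deg(g) + deg(h)}. -/
/-!
Write `¯` for reduction modulo `p`. Since `xⁿ - 1` is separable over `𝔽_p`, `h̄` and `ḡ` are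
coprime; lifting a Bézout identity to `ℤ_{p²}[x]` and using `p² = 0` shows `pf ∈ C`, hence
`fh ∈ C`, so `C` consists of the classes of `a·fh + p·b·f`. Dividing by `g` and by `h` one may
take `deg a < deg g` and `deg b < deg h`, and `b` only matters modulo `p`. This representation
is unique: if `fhg ∣ a·fh + p·b·f`, cancelling `f` and reducing modulo `p` gives `ḡ ∣ ā`, so
`a = p·a'`; dividing by `p` and reducing again gives `h̄ḡ ∣ ā'·h̄ + b̄`, whence `b̄ = 0` and
`ā' = 0` by degrees. So `(a, b) ↦ a·fh + p·b·f` is the required isomorphism.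
-/

open Polynomial

namespace Polynomial

variable {R : Type*} [CommRing R]

theorem Monic.eq_zero_of_dvd_of_degree_lt {g x : R[X]} (hg : g.Monic) (hdvd : g ∣ x)
    (hx : x.degree < g.degree) : x = 0 := by
  nontriviality R
  rw [← (modByMonic_eq_self_iff hg).2 hx, (modByMonic_eq_zero_iff_dvd hg).2 hdvd]

theorem Monic.dvd_of_mul_dvd_mul_left {h g x : R[X]} (hh : h.Monic) (hdvd : h * g ∣ h * x) :
    g ∣ x := by
  obtain ⟨q, hq⟩ := hdvd
  exact ⟨q, hh.isRegular.left (hq.trans (mul_assoc h g q))⟩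

theorem eq_zero_of_monic_mul_dvd_mul_add {h g x y : R[X]} (hh : h.Monic) (hg : g.Monic)
    (hx : x.degree < g.degree) (hy : y.degree < h.degree) (hdvd : h * g ∣ x * h + y) :
    x = 0 ∧ y = 0 := by
  have hy0 : y = 0 := hh.eq_zero_of_dvd_of_degree_lt
    ((dvd_add_right (dvd_mul_left h x)).1 ((dvd_mul_right h g).trans hdvd)) hy
  subst hy0
  rw [add_zero, mul_comm x] at hdvd
  exact ⟨hg.eq_zero_of_dvd_of_degree_lt (hh.dvd_of_mul_dvd_mul_left hdvd) hx, rfl⟩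

theorem degree_modByMonic_lt_natDegree {r h : R[X]} (hh : h.Monic) :
    (r %ₘ h).degree < h.natDegree := by
  nontriviality R
  exact (degree_modByMonic_lt r hh).trans_le degree_le_natDegree

variable [DecidableEq R]

theorem ofFn_toFn_of_degree_lt {n : ℕ} {u : R[X]} (hu : u.degree < n) :
    ofFn n (toFn n u) = u := by
  ext i
  by_cases hi : i < n
  · simp [hi, toFn]
  · rw [ofFn_coeff_eq_zero_of_ge _ (not_lt.1 hi),
      (degree_lt_iff_coeff_zero u n).1 hu i (not_lt.1 hi)]

theorem map_ofFn {S : Type*} [CommRing S] [DecidableEq S] (φ : R →+* S) {n : ℕ} (v : Fin n → R) :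
    (ofFn n v).map φ = ofFn n (φ ∘ v) := by
  ext i
  by_cases hi : i < n
  · simp [hi]
  · simp [not_lt.1 hi]

end Polynomial

namespace ZMod

variable {p : ℕ}

variable (p) in
abbrev modP : ZMod (p ^ 2) →+* ZMod p := castHom (dvd_pow_self p two_ne_zero) _

theorem modP_surjective : Function.Surjective (modP p) := castHom_surjective _

theorem modP_eq_zero_iff {c : ZMod (p ^ 2)} : modP p c = 0 ↔ (p : ZMod (p ^ 2)) ∣ c := by
  constructor
  · obtain ⟨k, rfl⟩ := intCast_surjective c
    rw [map_intCast, intCast_zmod_eq_zero_iff_dvd]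
    rintro ⟨m, rfl⟩
    exact ⟨m, by push_cast; ring⟩
  · rintro ⟨d, rfl⟩
    rw [map_mul, map_natCast, natCast_self, zero_mul]

theorem natCast_mul_eq_zero_iff [NeZero p] {c : ZMod (p ^ 2)} :
    (p : ZMod (p ^ 2)) * c = 0 ↔ modP p c = 0 := by
  obtain ⟨k, rfl⟩ := intCast_surjective c
  have hp : (p : ℤ) ≠ 0 := Int.natCast_ne_zero.2 (NeZero.ne p)
  rw [map_intCast, intCast_zmod_eq_zero_iff_dvd, ← Int.cast_natCast, ← Int.cast_mul,
    intCast_zmod_eq_zero_iff_dvd, Nat.cast_pow, sq, Int.mul_dvd_mul_iff_left hp]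

variable (p) in
def pMul : ZMod p →+ ZMod (p ^ 2) :=
  lift p ⟨zmultiplesHom _ (p : ZMod (p ^ 2)), by
    rw [zmultiplesHom_apply, natCast_zsmul, nsmul_eq_mul, ← sq, ← Nat.cast_pow, natCast_self]⟩

theorem pMul_modP (c : ZMod (p ^ 2)) : pMul p (modP p c) = p * c := by
  obtain ⟨k, rfl⟩ := intCast_surjective c
  rw [map_intCast, pMul, lift_coe, zmultiplesHom_apply, zsmul_eq_mul, mul_comm]

theorem map_modP_eq_zero_iff {u : (ZMod (p ^ 2))[X]} :
    u.map (modP p) = 0 ↔ (p : (ZMod (p ^ 2))[X]) ∣ u := by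
  have hker : RingHom.ker (modP p) = Ideal.span {(p : ZMod (p ^ 2))} := by
    ext c
    rw [RingHom.mem_ker, modP_eq_zero_iff, Ideal.mem_span_singleton]
  rw [← coe_mapRingHom, ← RingHom.mem_ker, ker_mapRingHom, hker, Ideal.map_span,
    Set.image_singleton, Ideal.mem_span_singleton, map_natCast]

theorem natCast_mul_eq_zero_iff_map [NeZero p] {u : (ZMod (p ^ 2))[X]} :
    (p : (ZMod (p ^ 2))[X]) * u = 0 ↔ u.map (modP p) = 0 := by
  simp only [Polynomial.ext_iff, coeff_natCast_mul, coeff_map, coeff_zero,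
    natCast_mul_eq_zero_iff]

theorem map_modP_natCast_mul (u : (ZMod (p ^ 2))[X]) :
    ((p : (ZMod (p ^ 2))[X]) * u).map (modP p) = 0 :=
  map_modP_eq_zero_iff.2 (dvd_mul_right _ _)

theorem map_dvd_map_of_dvd_natCast_mul_s14 [NeZero p] {P u : (ZMod (p ^ 2))[X]} (hP : P.Monic)
    (hdvd : P ∣ (p : (ZMod (p ^ 2))[X]) * u) : P.map (modP p) ∣ u.map (modP p) := by
  obtain ⟨q, hq⟩ := hdvd
  have hq0 : q.map (modP p) = 0 := by
    rw [← (hP.map (modP p)).mul_right_eq_zero_iff, ← Polynomial.map_mul, ← hq,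
      map_modP_natCast_mul]
  obtain ⟨q', rfl⟩ := map_modP_eq_zero_iff.1 hq0
  have : (p : (ZMod (p ^ 2))[X]) * (u - P * q') = 0 := by linear_combination hq
  rw [natCast_mul_eq_zero_iff_map, Polynomial.map_sub, sub_eq_zero] at this
  exact ⟨q'.map (modP p), by rw [this, Polynomial.map_mul]⟩

theorem degree_map_modP [Fact (1 < p)] {g : (ZMod (p ^ 2))[X]} (hg : g.Monic) :
    (g.map (modP p)).degree = g.natDegree := by
  rw [degree_eq_natDegree (hg.map _).ne_zero, hg.natDegree_map]

theorem separable_X_pow_sub_one [Fact p.Prime] {n : ℕ} (hn : n.Coprime p) :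
    (X ^ n - 1 : (ZMod p)[X]).Separable := by
  simpa using separable_X_pow_sub_C (1 : ZMod p) (unitOfCoprime n hn).ne_zero one_ne_zero

theorem exists_natCast_dvd_mul_add_mul_sub_one [Fact p.Prime] {n : ℕ} (hn : n.Coprime p)
    {f h g : (ZMod (p ^ 2))[X]} (hfac : f * h * g = X ^ n - 1) :
    ∃ U V : (ZMod (p ^ 2))[X], (p : (ZMod (p ^ 2))[X]) ∣ U * h + V * g - 1 := by
  have hsep : (f.map (modP p) * h.map (modP p) * g.map (modP p)).Separable := by
    simpa [← Polynomial.map_mul, hfac] using separable_X_pow_sub_one hn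
  obtain ⟨u, v, huv⟩ := hsep.isCoprime.of_mul_left_right
  obtain ⟨U, rfl⟩ := map_surjective _ modP_surjective u
  obtain ⟨V, rfl⟩ := map_surjective _ modP_surjective v
  exact ⟨U, V, map_modP_eq_zero_iff.1 (by simp [huv])⟩

end ZMod

open ZMod

noncomputable def codeWord (p : ℕ) (f h g : (ZMod (p ^ 2))[X]) :
    (Fin g.natDegree → ZMod (p ^ 2)) × (Fin h.natDegree → ZMod p) →+ (ZMod (p ^ 2))[X] :=
  ((AddMonoidHom.mulRight (f * h)).comp (ofFn _).toAddMonoidHom).coprod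
    ((AddMonoidHom.mulRight f).comp ((ofFn _).toAddMonoidHom.comp ((pMul p).compLeft _)))

section CyclicCode

variable {p n : ℕ} {f h g : (ZMod (p ^ 2))[X]}

theorem codeWord_apply (a : Fin g.natDegree → ZMod (p ^ 2)) (b : Fin h.natDegree → ZMod p) :
    codeWord p f h g (a, b) = ofFn _ a * (f * h) + ofFn _ (pMul p ∘ b) * f :=
  rfl

theorem codeWord_modP_comp (a : Fin g.natDegree → ZMod (p ^ 2))
    (b : Fin h.natDegree → ZMod (p ^ 2)) :
    codeWord p f h g (a, modP p ∘ b) = ofFn _ a * (f * h) + p * ofFn _ b * f := by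
  have : pMul p ∘ (modP p ∘ b) = (p : ZMod (p ^ 2)) • b := funext fun j => pMul_modP (b j)
  rw [codeWord_apply, this, _root_.map_smul, smul_eq_C_mul, map_natCast]

theorem Qmk_eq_Qmk_iff {u v : (ZMod (p ^ 2))[X]} : Qmk p n u = Qmk p n v ↔ X ^ n - 1 ∣ u - v := by
  rw [Qmk, Ideal.Quotient.eq, Ideal.mem_span_singleton]

theorem Qmk_natCast_mul_mem_span [Fact p.Prime] (hn : n.Coprime p)
    (hfac : f * h * g = X ^ n - 1) :
    Qmk p n (p * f) ∈ Ideal.span {Qmk p n (f * h + p * f)} := by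
  obtain ⟨U, V, ⟨W, hW⟩⟩ := exists_natCast_dvd_mul_add_mul_sub_one hn hfac
  have hp2 : (p : (ZMod (p ^ 2))[X]) ^ 2 = 0 := by rw [← Nat.cast_pow, CharP.cast_eq_zero]
  -- `pf ≡ (Vg + pU)(fh + pf)` modulo `fhg`, where `Uh + Vg = 1 + pW`
  refine Ideal.mem_span_singleton'.2 ⟨Qmk p n (V * g + p * U), ?_⟩
  rw [← map_mul, Qmk_eq_Qmk_iff]
  exact ⟨V, by linear_combination V * hfac + p * f * hW + (f * W + U * f) * hp2⟩

theorem Qmk_codeWord_mem_span [Fact p.Prime] (hn : n.Coprime p) (hfac : f * h * g = X ^ n - 1)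
    (ab : (Fin g.natDegree → ZMod (p ^ 2)) × (Fin h.natDegree → ZMod p)) :
    Qmk p n (codeWord p f h g ab) ∈ Ideal.span {Qmk p n (f * h + p * f)} := by
  obtain ⟨a, b⟩ := ab
  obtain ⟨b, rfl⟩ := (modP_surjective (p := p)).comp_left b
  have hpf := Qmk_natCast_mul_mem_span hn hfac
  have hfh : Qmk p n (f * h) ∈ Ideal.span {Qmk p n (f * h + p * f)} := by
    simpa using sub_mem (Ideal.mem_span_singleton_self _) hpf
  rw [codeWord_modP_comp, mul_right_comm, mul_comm _ (ofFn _ b)]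
  simpa only [map_add, map_mul] using
    add_mem (Ideal.mul_mem_left _ (Qmk p n (ofFn _ a)) hfh)
      (Ideal.mul_mem_left _ (Qmk p n (ofFn _ b)) hpf)

theorem exists_codeWord_eq_of_mem_span (hh : h.Monic) (hg : g.Monic)
    (hfac : f * h * g = X ^ n - 1) {x : (ZMod (p ^ 2))[X] ⧸ Ideal.span {X ^ n - 1}}
    (hx : x ∈ Ideal.span {Qmk p n (f * h + (p : (ZMod (p ^ 2))[X]) * f)}) :
    ∃ ab, Qmk p n (codeWord p f h g ab) = x := by
  obtain ⟨y, rfl⟩ := Ideal.mem_span_singleton'.1 hx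
  obtain ⟨r, rfl⟩ := Ideal.Quotient.mk_surjective y
  -- `r(fh + pf) = s·fh + p·(r %ₘ h)·f`
  set s := r + (p : (ZMod (p ^ 2))[X]) * (r /ₘ h)
  have hr := modByMonic_add_div r h
  have hs := modByMonic_add_div s g
  refine ⟨(toFn _ (s %ₘ g), modP p ∘ toFn _ (r %ₘ h)), ?_⟩
  change _ = Qmk p n r * _
  rw [← map_mul, codeWord_modP_comp, ofFn_toFn_of_degree_lt, ofFn_toFn_of_degree_lt,
    Qmk_eq_Qmk_iff, ← hfac]
  · exact ⟨-(s /ₘ g), by linear_combination (f * h) * hs + (p * f) * hr⟩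
  · exact degree_modByMonic_lt_natDegree hh
  · exact degree_modByMonic_lt_natDegree hg

theorem eq_zero_of_Qmk_codeWord_eq_zero [Fact (1 < p)] (hf : f.Monic) (hh : h.Monic)
    (hg : g.Monic) (hfac : f * h * g = X ^ n - 1)
    {ab : (Fin g.natDegree → ZMod (p ^ 2)) × (Fin h.natDegree → ZMod p)}
    (h0 : Qmk p n (codeWord p f h g ab) = 0) : ab = 0 := by
  obtain ⟨a, b⟩ := ab
  obtain ⟨b, rfl⟩ := (modP_surjective (p := p)).comp_left b
  rw [← map_zero (Qmk p n), Qmk_eq_Qmk_iff, sub_zero, ← hfac, codeWord_modP_comp] at h0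
  have hdvd : h * g ∣ ofFn _ a * h + p * ofFn _ b :=
    hf.dvd_of_mul_dvd_mul_left (by convert h0 using 1 <;> ring)
  have hdeg {u : (ZMod (p ^ 2))[X]} (hu : u.Monic) (v : Fin u.natDegree → ZMod p) :
      (ofFn _ v).degree < (u.map (modP p)).degree := by
    rw [degree_map_modP hu]; exact ofFn_degree_lt v
  have ha : modP p ∘ a = 0 := by
    have : h.map (modP p) * g.map (modP p) ∣ h.map (modP p) * ofFn _ (modP p ∘ a) := by
      simpa [map_ofFn, map_modP_natCast_mul, mul_comm] using map_dvd (modP p) hdvd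
    exact (map_eq_zero_iff _ (injective_ofFn _)).1 <| (hg.map _).eq_zero_of_dvd_of_degree_lt
      ((hh.map _).dvd_of_mul_dvd_mul_left this) (hdeg hg _)
  choose a' ha' using fun i => modP_eq_zero_iff.1 (congrFun ha i)
  have hdvd' : h * g ∣ p * (ofFn _ a' * h + ofFn _ b) := by
    have : a = (p : ZMod (p ^ 2)) • a' := funext ha'
    rwa [this, _root_.map_smul, smul_eq_C_mul, map_natCast, mul_assoc, ← mul_add] at hdvd
  obtain ⟨ha'0, hb0⟩ := eq_zero_of_monic_mul_dvd_mul_add (hh.map _) (hg.map _)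
    (hdeg hg _) (hdeg hh _)
    (by simpa [map_ofFn] using map_dvd_map_of_dvd_natCast_mul_s14 (hh.mul hg) hdvd')
  rw [map_eq_zero_iff _ (injective_ofFn _)] at ha'0 hb0
  refine Prod.ext (funext fun i => ?_) hb0
  change a i = 0
  rw [ha' i]
  exact natCast_mul_eq_zero_iff.2 (congrFun ha'0 i)

variable (p n) in
noncomputable def codeAddEquiv [Fact p.Prime] (hn : n.Coprime p) (hf : f.Monic) (hh : h.Monic)
    (hg : g.Monic) (hfac : f * h * g = X ^ n - 1) :
    Ideal.span {Qmk p n (f * h + (p : (ZMod (p ^ 2))[X]) * f)} ≃+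
      (Fin g.natDegree → ZMod (p ^ 2)) × (Fin h.natDegree → ZMod p) :=
  .symm <| .ofBijective
    (AddMonoidHom.mk'
      (fun ab => ⟨Qmk p n (codeWord p f h g ab), Qmk_codeWord_mem_span hn hfac ab⟩)
      fun _ _ => by ext; simp)
    ⟨(injective_iff_map_eq_zero _).2 fun _ h0 =>
        eq_zero_of_Qmk_codeWord_eq_zero hf hh hg hfac (congrArg Subtype.val h0),
      fun ⟨_, hx⟩ => (exists_codeWord_eq_of_mem_span hh hg hfac hx).imp fun _ => Subtype.ext⟩

end CyclicCode

theorem code_type_card_general (p n : ℕ) (hp : p.Prime) (hco : Nat.Coprime n p)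
    (f h g : Polynomial (ZMod (p ^ 2))) (hf : f.Monic) (hh : h.Monic) (hg : g.Monic)
    (hfac : f * h * g = X ^ n - 1) :
    Nonempty ((Ideal.span {Qmk p n (f * h + (p : Polynomial (ZMod (p ^ 2))) * f)}) ≃+
        ((Fin g.natDegree → ZMod (p ^ 2)) × (Fin h.natDegree → ZMod p))) ∧
    Nat.card (Ideal.span {Qmk p n (f * h + (p : Polynomial (ZMod (p ^ 2))) * f)})
      = p ^ (2 * g.natDegree + h.natDegree) := by
  have : Fact p.Prime := ⟨hp⟩
  let e := codeAddEquiv p n hco hf hh hg hfac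
  refine ⟨⟨e⟩, ?_⟩
  rw [Nat.card_congr e.toEquiv, Nat.card_prod, Nat.card_fun, Nat.card_fun, Nat.card_zmod,
    Nat.card_zmod, Nat.card_fin, Nat.card_fin]
  ring

/-- the cyclic code `C = ⟨fh + pf⟩ ⊆ ℤ_{p²}[x]/(xⁿ-1)` with
`fhg = xⁿ-1` is isomorphic as an abelian group to
`(ℤ_{p²})^{deg g} × (ℤ_p)^{deg h}`; in particular `|C| = p^{2·deg g + deg h}`. -/
theorem code_type_card (p n : ℕ) (hp : p.Prime) (hn : 0 < n) (hco : Nat.Coprime n p)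
    (f h g : Polynomial (ZMod (p ^ 2))) (hf : f.Monic) (hh : h.Monic) (hg : g.Monic)
    (hfac : f * h * g = X ^ n - 1) :
    Nonempty ((Ideal.span {Qmk p n (f * h + (p : Polynomial (ZMod (p ^ 2))) * f)}) ≃+
        ((Fin g.natDegree → ZMod (p ^ 2)) × (Fin h.natDegree → ZMod p))) ∧
    Nat.card (Ideal.span {Qmk p n (f * h + (p : Polynomial (ZMod (p ^ 2))) * f)})
      = p ^ (2 * g.natDegree + h.natDegree) :=
  code_type_card_general p n hp hco f h g hf hh hg hfac
end

section
/- Let p be a prime and a, b ∈ {0,...,p-1}. Define f(a,b) = Σ_{k=1}^{p-1} Σ_{j=p-k}^{p-1} [ Π_{m=0}^{p-1} (a-m)(b-m) ] / [ (a-k)(b-j) ], computed in ℤ_p (each summand is a product of the linear factors (a-m) for m ≠ k and (b-m) for m ≠ j). Then f(a,b) = 1 in ℤ_p if a + b ≥ p, and f(a,b) = 0 if a + b < p. -/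
/-!
For `m` ranging over `0, …, p-1` minus `k`, the differences `a - m` run over all residues mod `p`
except `a - k`. So `∏_{m ≠ k} (a - m)` vanishes unless `a = k`, and then it is the product of all
nonzero residues, which is `-1` (Wilson). The double sum thus collapses to `(-1)·(-1) = 1` exactly
when `(a, b)` is an index pair of the sum, i.e. when `1 ≤ a` and `p - a ≤ b`, i.e. `p ≤ a + b`.
-/

open Finset

theorem FiniteField.prod_univ_erase_zero_eq_neg_one (K : Type*) [Field K] [Fintype K]
    [DecidableEq K] : ∏ x ∈ univ.erase (0 : K), x = -1 :=
  calc ∏ x ∈ univ.erase (0 : K), x = ∏ x : {x : K // x ≠ 0}, (x : K) :=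
        prod_subtype _ (by simp) _
    _ = ∏ u : Kˣ, (u : K) := (Fintype.prod_equiv unitsEquivNeZero _ _ fun _ => rfl).symm
    _ = -1 := by rw [← Units.coe_prod, prod_univ_units_id_eq_neg_one, Units.val_neg, Units.val_one]

theorem FiniteField.prod_univ_erase_sub {K : Type*} [Field K] [Fintype K] [DecidableEq K]
    (y z : K) : ∏ x ∈ univ.erase y, (z - x) = if z = y then -1 else 0 := by
  split_ifs with h
  · subst h
    rw [← prod_univ_erase_zero_eq_neg_one K]
    exact prod_nbij' (z - ·) (z - ·) (by simp [sub_eq_zero, eq_comm]) (by simp)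
      (by simp) (by simp) (by simp)
  · exact prod_eq_zero (mem_erase.2 ⟨h, mem_univ z⟩) (sub_self z)

theorem ZMod.prod_range_erase_natCast {M : Type*} [CommMonoid M] {n k : ℕ} [NeZero n]
    (hk : k < n) (f : ZMod n → M) :
    ∏ m ∈ (range n).erase k, f m = ∏ x ∈ univ.erase (k : ZMod n), f x := by
  refine prod_nbij' (↑) ZMod.val ?_ ?_ ?_ (by simp) (by simp)
  · simp +contextual [ZMod.natCast_eq_natCast_iff', Nat.mod_eq_of_lt, hk]
  · intro x hx
    simp only [mem_erase, ne_eq, mem_univ, and_true, mem_range] at hx ⊢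
    exact ⟨by rintro rfl; exact hx (ZMod.natCast_zmod_val x).symm, ZMod.val_lt x⟩
  · simp +contextual [Nat.mod_eq_of_lt]

theorem ZMod.prod_range_erase_natCast_sub {p : ℕ} [Fact p.Prime] {a k : ℕ} (ha : a < p)
    (hk : k < p) :
    ∏ m ∈ (range p).erase k, ((a : ZMod p) - m) = if a = k then -1 else 0 := by
  simp only [prod_range_erase_natCast hk, FiniteField.prod_univ_erase_sub,
    ZMod.natCast_eq_natCast_iff', Nat.mod_eq_of_lt ha, Nat.mod_eq_of_lt hk]

theorem Finset.sum_sum_ite_eq_mul_ite_eq {R : Type*} [NonUnitalNonAssocSemiring R] {ι κ : Type*}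
    [DecidableEq ι] [DecidableEq κ] (s : Finset ι) (t : ι → Finset κ) (i : ι) (j : κ) (c d : R) :
    ∑ k ∈ s, ∑ l ∈ t k, (if i = k then c else 0) * (if j = l then d else 0) =
      if i ∈ s ∧ j ∈ t i then c * d else 0 := by
  rw [ite_and, ← sum_ite_eq s i fun k => if j ∈ t k then c * d else 0]
  refine sum_congr rfl fun k _ => ?_
  rcases eq_or_ne i k with rfl | _ <;> simp [*, mul_ite, sum_ite_eq]

/-- the Lagrange-interpolation expression
`f(a,b) = Σ_{k=1}^{p-1} Σ_{j=p-k}^{p-1} (Π_{m≠k}(a-m))·(Π_{m≠j}(b-m))`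
is the indicator (in `ℤ_p`) of the carry condition `a + b ≥ p`. -/
theorem carry_polynomial_identity (p : ℕ) (hp : p.Prime) (a b : ℕ)
    (ha : a < p) (hb : b < p) :
    (∑ k ∈ Finset.Icc 1 (p - 1), ∑ j ∈ Finset.Icc (p - k) (p - 1),
        (∏ m ∈ (Finset.range p).erase k, ((a : ZMod p) - (m : ZMod p))) *
          (∏ m ∈ (Finset.range p).erase j, ((b : ZMod p) - (m : ZMod p))))
      = if p ≤ a + b then 1 else 0 := by
  have := Fact.mk hp
  calc _ = ∑ k ∈ Icc 1 (p - 1), ∑ j ∈ Icc (p - k) (p - 1),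
        (if a = k then (-1 : ZMod p) else 0) * (if b = j then -1 else 0) := by
        refine sum_congr rfl fun k hk => sum_congr rfl fun j hj => ?_
        rw [mem_Icc] at hk hj
        rw [ZMod.prod_range_erase_natCast_sub ha (by omega),
          ZMod.prod_range_erase_natCast_sub hb (by omega)]
    _ = if a ∈ Icc 1 (p - 1) ∧ b ∈ Icc (p - a) (p - 1) then (-1) * (-1) else 0 :=
        sum_sum_ite_eq_mul_ite_eq _ _ _ _ _ _
    _ = if p ≤ a + b then 1 else 0 := by
        simp only [mem_Icc, neg_mul_neg, mul_one]
        exact if_congr (by omega) rfl rfl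
end
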